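/- arXiv:2411.08075 — 5 statements merged into one kernel-verified Lean document; each statement's English description precedes it below -/
import Mathlib

section
/- Let Σ=(X,𝒰,φ) be a time-varying control system satisfying the BIC property. Suppose there exist a continuous function V:ℝ≥0×X→ℝ≥0 with V(t,0)=0 for all t≥0, functions α₁,α₂∈𝒦∞, κ∈𝒦 and a positive definite function μ∈𝒫 such that α₁(‖x‖_X) ≤ V(t,x) ≤ α₂(‖x‖_X) for all t≥0 and x∈X, and such that for all t≥0, x∈X and u∈𝒰: if ‖x‖_X ≥ κ(‖u‖_𝒰) then the Lie derivative satisfies V̇_u(t,x) ≤ −μ(V(t,x)). Then Σ is input-to-state stable (ISS): it is forward complete and there exist β∈𝒦ℒ and γ∈𝒦 such that ‖φ(t,t₀,x₀,u)‖_X ≤ β(‖x₀‖_X, t−t₀) + γ(‖u‖_𝒰) for all x₀∈X, u∈𝒰 and t≥t₀≥0. -/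
/-!
Along a trajectory put `g t = V t (φ t)` and `θ = α₂ (κ ‖u‖)`. Wherever `g > θ` the state lies
outside the ball of radius `κ ‖u‖`, so the Lie derivative bound makes the lower right Dini
derivative of `g` at most `-μ (g) < 0`; a contact-point comparison argument then shows that `g`
never rises above any level `c > θ` it starts below, which together with BIC gives forward
completeness. Since `μ` exceeds some `m n > 0` on `[1/(n+1), n+1]`, `g - θ` moreover falls at rate
`m n` until it is below `1/(n+1)`. The infimum over `n` of these linear bounds, with the rates cut
off continuously in the initial value, is continuous, increasing in the initial value and decays to
`0` in time; inverting `α₁` and using `α₁⁻¹ (a + b) ≤ α₁⁻¹ (2a) + α₁⁻¹ (2b)` yields `β` and `γ`.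
-/

open Filter Topology Set MeasureTheory
open scoped RealInnerProductSpace

noncomputable section

/-- Class `𝒦`: continuous, strictly increasing on `[0,∞)`, vanishing at `0`. -/
structure ClassK (g : ℝ → ℝ) : Prop where
  cont : ContinuousOn g (Set.Ici 0)
  mono : StrictMonoOn g (Set.Ici 0)
  zero : g 0 = 0
  nonneg : ∀ r : ℝ, 0 ≤ r → 0 ≤ g r

/-- Class `𝒦∞`: unbounded class-`𝒦` functions. -/
structure ClassKInf (g : ℝ → ℝ) : Prop where
  toClassK : ClassK g
  unbounded : ∀ M : ℝ, ∃ r : ℝ, 0 ≤ r ∧ M < g r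

/-- Class `𝒫`: positive definite functions. -/
structure ClassPD (g : ℝ → ℝ) : Prop where
  cont : ContinuousOn g (Set.Ici 0)
  zero : g 0 = 0
  pos : ∀ r : ℝ, 0 < r → 0 < g r

/-- Class `𝒦ℒ`. -/
structure ClassKL (b : ℝ → ℝ → ℝ) : Prop where
  classK : ∀ t : ℝ, 0 ≤ t → ClassK (fun r => b r t)
  contL : ∀ r : ℝ, 0 < r → ContinuousOn (fun t => b r t) (Set.Ici 0)
  antiL : ∀ r : ℝ, 0 < r → StrictAntiOn (fun t => b r t) (Set.Ici 0)
  tendstoL : ∀ r : ℝ, 0 < r → Tendsto (fun t => b r t) atTop (nhds 0)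

/-- An abstract time-varying control system `Σ = (X, 𝒰, φ)`:
inputs are functions `ℝ → U` from an admissible set, with a norm `unorm`;
`tm t0 x0 u ∈ (t0,∞]` is the maximal existence time and `phi` the transition map.
The axioms are shift invariance of inputs, the identity property, causality,
continuity of trajectories and the cocycle property. -/
structure TVSystem (X : Type*) (U : Type*) [NormedAddCommGroup X] [NormedAddCommGroup U] where
  inputs : Set (ℝ → U)
  unorm : (ℝ → U) → ℝ
  tm : ℝ → X → (ℝ → U) → EReal
  phi : ℝ → ℝ → X → (ℝ → U) → X
  unorm_nonneg : ∀ u, 0 ≤ unorm u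
  shift_invariant : ∀ u ∈ inputs, ∀ τ : ℝ, 0 ≤ τ →
    (fun s => u (s + τ)) ∈ inputs ∧ unorm (fun s => u (s + τ)) ≤ unorm u
  tm_gt : ∀ t0 : ℝ, 0 ≤ t0 → ∀ x0 u, (t0 : EReal) < tm t0 x0 u
  identity : ∀ t0 : ℝ, 0 ≤ t0 → ∀ x0 u, phi t0 t0 x0 u = x0
  causality : ∀ t0 : ℝ, 0 ≤ t0 → ∀ x0, ∀ u ∈ inputs, ∀ v ∈ inputs, ∀ t : ℝ, t0 ≤ t →
    (t : EReal) < tm t0 x0 u → (∀ s : ℝ, t0 ≤ s → s < t → u s = v s) →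
    (t : EReal) < tm t0 x0 v ∧ phi t t0 x0 u = phi t t0 x0 v
  trajCont : ∀ t0 : ℝ, 0 ≤ t0 → ∀ x0 u, ContinuousOn (fun t => phi t t0 x0 u)
    {t : ℝ | t0 ≤ t ∧ (t : EReal) < tm t0 x0 u}
  cocycle : ∀ t0 : ℝ, 0 ≤ t0 → ∀ x0 u, ∀ t : ℝ, t0 ≤ t → (t : EReal) < tm t0 x0 u →
    ∀ τ : ℝ, t0 ≤ τ → τ ≤ t → phi t τ (phi τ t0 x0 u) u = phi t t0 x0 u

namespace TVSystem

variable {X U : Type*} [NormedAddCommGroup X] [NormedAddCommGroup U]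

/-- Boundedness-implies-continuation property. -/
def BIC (S : TVSystem X U) : Prop :=
  ∀ t0 : ℝ, 0 ≤ t0 → ∀ x0 : X, ∀ u ∈ S.inputs, S.tm t0 x0 u ≠ ⊤ →
    ∀ M : ℝ, 0 < M → ∃ t : ℝ, t0 ≤ t ∧ (t : EReal) < S.tm t0 x0 u ∧ M < ‖S.phi t t0 x0 u‖

/-- Forward completeness. -/
def ForwardComplete (S : TVSystem X U) : Prop :=
  ∀ t0 : ℝ, 0 ≤ t0 → ∀ x0 : X, ∀ u ∈ S.inputs, S.tm t0 x0 u = ⊤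

/-- Input-to-state stability. -/
def ISS (S : TVSystem X U) : Prop :=
  S.ForwardComplete ∧ ∃ β : ℝ → ℝ → ℝ, ∃ γ : ℝ → ℝ, ClassKL β ∧ ClassK γ ∧
    ∀ t0 : ℝ, 0 ≤ t0 → ∀ x0 : X, ∀ u ∈ S.inputs, ∀ t : ℝ, t0 ≤ t →
      ‖S.phi t t0 x0 u‖ ≤ β ‖x0‖ (t - t0) + γ (S.unorm u)

/-- Integral input-to-state stability. -/
def iISS (S : TVSystem X U) : Prop :=
  S.ForwardComplete ∧ ∃ α : ℝ → ℝ, ∃ μ : ℝ → ℝ, ∃ β : ℝ → ℝ → ℝ,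
    ClassKInf α ∧ ClassK μ ∧ ClassKL β ∧
    ∀ t0 : ℝ, 0 ≤ t0 → ∀ x0 : X, ∀ u ∈ S.inputs, ∀ t : ℝ, t0 ≤ t →
      ‖S.phi t t0 x0 u‖ ≤ β ‖x0‖ (t - t0) + α (∫ s in t0..t, μ ‖u s‖)

/-- Input-to-state practical stability. -/
def ISpS (S : TVSystem X U) : Prop :=
  S.ForwardComplete ∧ ∃ β : ℝ → ℝ → ℝ, ∃ γ : ℝ → ℝ, ∃ r : ℝ,
    ClassKL β ∧ ClassK γ ∧ 0 < r ∧
    ∀ t0 : ℝ, 0 ≤ t0 → ∀ x0 : X, ∀ u ∈ S.inputs, ∀ t : ℝ, t0 ≤ t →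
      ‖S.phi t t0 x0 u‖ ≤ β ‖x0‖ (t - t0) + γ (S.unorm u) + r

/-- Completely practical uniform asymptotic gain property. -/
def CpUAG (S : TVSystem X U) : Prop :=
  ∃ β : ℝ → ℝ → ℝ, ∃ γ : ℝ → ℝ, ∃ c cs : ℝ,
    ClassKL β ∧ ClassK γ ∧ 0 < c ∧ 0 < cs ∧
    ∀ t0 : ℝ, 0 ≤ t0 → ∀ x0 : X, ∀ u ∈ S.inputs, ∀ t : ℝ, t0 ≤ t →
      ‖S.phi t t0 x0 u‖ ≤ β (‖x0‖ + c) (t - t0) + γ (S.unorm u) + cs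

/-- Lie (Dini) derivative of `V` along the trajectories of the system. -/
def lieDeriv (S : TVSystem X U) (V : ℝ → X → ℝ) (u : ℝ → U) (t : ℝ) (x : X) : ℝ :=
  Filter.limsup (fun h => (V (t + h) (S.phi (t + h) t x u) - V t x) / h)
    (nhdsWithin 0 (Set.Ioi 0))

end TVSystem

/-- `liminf_{z → x⁺} slope g x z ≤ c`, phrased without junk values. -/
def SlopeLiminfLE (g : ℝ → ℝ) (x c : ℝ) : Prop :=
  ∀ r, c < r → ∃ᶠ z in 𝓝[>] x, slope g x z < r

/-- `c < 0` excludes the junk value `limsup f l = 0` of an `f` unbounded above. -/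
theorem frequently_lt_of_limsup_le_of_neg {α : Type*} {l : Filter α} [l.NeBot] {f : α → ℝ}
    {c r : ℝ} (h : limsup f l ≤ c) (hc : c < 0) (hr : c < r) : ∃ᶠ z in l, f z < r := by
  by_contra hfr
  rw [not_frequently] at hfr
  by_cases hbdd : l.IsBoundedUnder (· ≤ ·) f
  · have := le_limsup_of_frequently_le (hfr.mono fun z hz => not_lt.1 hz).frequently hbdd
    linarith
  · rw [Real.limsup_of_not_isBoundedUnder hbdd] at h
    linarith

/-- A variant of `image_le_of_liminf_slope_right_lt_deriv_boundary'` that only asks for the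
slope bound at the points where `f` touches `B`. -/
theorem image_le_of_slopeLiminfLE_lt_deriv_of_contact {f B B' : ℝ → ℝ} {a b : ℝ}
    (hf : ContinuousOn f (Icc a b)) (ha : f a ≤ B a) (hB : ContinuousOn B (Icc a b))
    (hB' : ∀ x ∈ Ico a b, HasDerivWithinAt B (B' x) (Ici x) x)
    (bound : ∀ x ∈ Ico a b, f x = B x → ∃ c < B' x, SlopeLiminfLE f x c) :
    ∀ ⦃x⦄, x ∈ Icc a b → f x ≤ B x := by
  change Icc a b ⊆ {x | f x ≤ B x}
  have A : ContinuousOn (fun x => (f x, B x)) (Icc a b) := hf.prodMk hB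
  have hclosed : IsClosed ({x | f x ≤ B x} ∩ Icc a b) := by
    rw [inter_comm]
    exact A.preimage_isClosed_of_isClosed isClosed_Icc OrderClosedTopology.isClosed_le'
  apply hclosed.Icc_subset_of_forall_exists_gt ha
  rintro x ⟨hxB : f x ≤ B x, xab⟩ y hy
  rcases hxB.lt_or_eq with hxB | hxB
  · refine nonempty_of_mem (inter_mem ?_ (Ioc_mem_nhdsGT_of_mem ⟨le_rfl, hy⟩))
    have : ∀ᶠ x in 𝓝[Icc a b] x, f x < B x :=
      A x (Ico_subset_Icc_self xab) (IsOpen.mem_nhds (isOpen_lt continuous_fst continuous_snd) hxB)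
    have : ∀ᶠ x in 𝓝[>] x, f x < B x := nhdsWithin_le_of_mem (Icc_mem_nhdsGT_of_mem xab) this
    exact this.mono fun _ => le_of_lt
  · obtain ⟨c, hcB, hfc⟩ := bound x xab hxB
    obtain ⟨r, hcr, hrB⟩ := exists_between hcB
    have HB : ∀ᶠ z in 𝓝[>] x, r < slope B x z :=
      (hasDerivWithinAt_iff_tendsto_slope' <| lt_irrefl x).1 (hB' x xab).Ioi_of_Ici
        (Ioi_mem_nhds hrB)
    obtain ⟨z, hfz, hzB, hz⟩ : ∃ z, slope f x z < r ∧ r < slope B x z ∧ z ∈ Ioc x y :=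
      ((hfc r hcr).and_eventually (HB.and (Ioc_mem_nhdsGT_of_mem ⟨le_rfl, hy⟩))).exists
    refine ⟨z, ?_, hz⟩
    have := (hfz.trans hzB).le
    rwa [slope_def_field, slope_def_field, div_le_div_iff_of_pos_right (sub_pos.2 hz.1), hxB,
      sub_le_sub_iff_right] at this

section Comparison

variable {g μ : ℝ → ℝ} {a b θ c : ℝ}

theorem le_max_of_slopeLiminfLE (hg : ContinuousOn g (Icc a b))
    (hdec : ∀ x ∈ Ico a b, θ < g x → SlopeLiminfLE g x (-μ (g x)))
    (hθc : θ < c) (hμ : 0 < μ (max (g a) c)) :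
    ∀ x ∈ Icc a b, g x ≤ max (g a) c := by
  refine image_le_of_slopeLiminfLE_lt_deriv_of_contact hg (le_max_left _ _) continuousOn_const
    (fun _ _ => hasDerivWithinAt_const _ _ _) fun x hx hgx => ⟨-μ (g x), ?_, hdec x hx ?_⟩
  · rw [hgx]
    exact neg_neg_iff_pos.2 hμ
  · exact hθc.trans_le (hgx ▸ le_max_right _ _)

theorem le_sub_mul_of_slopeLiminfLE {m : ℝ} (hg : ContinuousOn g (Icc a b))
    (hdec : ∀ x ∈ Ico a b, θ < g x → SlopeLiminfLE g x (-μ (g x)))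
    (hθc : θ < c) (hm : 0 ≤ m) (hmμ : ∀ s, c ≤ s → s ≤ g a → m < μ s)
    (hbc : c ≤ g a - m * (b - a)) :
    ∀ x ∈ Icc a b, g x ≤ g a - m * (x - a) := by
  have hB' (x : ℝ) : HasDerivWithinAt (fun t => g a - m * (t - a)) (-m) (Ici x) x := by
    simpa using (((hasDerivAt_id x).sub_const a).const_mul m).const_sub (g a) |>.hasDerivWithinAt
  refine image_le_of_slopeLiminfLE_lt_deriv_of_contact hg (by simp) (by fun_prop)
    (fun x _ => hB' x) fun x hx hgx => ?_
  have hcx : c ≤ g x := by nlinarith [hx.2]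
  have hxa : g x ≤ g a := by nlinarith [hx.1]
  exact ⟨-μ (g x), neg_lt_neg (hmμ _ hcx hxa), hdec x hx (hθc.trans_le hcx)⟩

/-- Two phases: `g` falls at rate `m` down to the level `L`, and then stays below `L`. -/
theorem le_max_sub_mul_of_slopeLiminfLE {L m : ℝ} (hg : ContinuousOn g (Ici a))
    (hdec : ∀ x ∈ Ici a, θ < g x → SlopeLiminfLE g x (-μ (g x)))
    (hμ : ∀ s, θ < s → 0 < μ s) (hθL : θ < L) (hm : 0 < m)
    (hmμ : ∀ s, L ≤ s → s ≤ g a → m < μ s) {τ : ℝ} (hτ : 0 ≤ τ) :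
    g (a + τ) ≤ max L (g a - m * τ) := by
  have hdec' {a' b : ℝ} (ha' : a ≤ a') :
      ∀ x ∈ Ico a' b, θ < g x → SlopeLiminfLE g x (-μ (g x)) :=
    fun x hx => hdec x (ha'.trans hx.1)
  have hg' {a' b : ℝ} (ha' : a ≤ a') : ContinuousOn g (Icc a' b) :=
    hg.mono fun x hx => ha'.trans hx.1
  have hstay {a' : ℝ} (ha' : a ≤ a') (ha'τ : a' ≤ a + τ) (hga' : g a' ≤ L) :
      g (a + τ) ≤ L := by
    have := le_max_of_slopeLiminfLE (hg' ha') (hdec' ha') hθL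
      (by rw [max_eq_right hga']; exact hμ L hθL) (a + τ) ⟨ha'τ, le_rfl⟩
    rwa [max_eq_right hga'] at this
  by_cases hgaL : g a ≤ L
  · exact (hstay le_rfl (by linarith) hgaL).trans (le_max_left _ _)
  set T := (g a - L) / m with hT
  have hmT : m * T = g a - L := by rw [hT]; field_simp
  rcases le_or_gt τ T with hτT | hτT
  · have := le_sub_mul_of_slopeLiminfLE (hg' le_rfl) (hdec' le_rfl) hθL hm.le hmμ
      (b := a + τ) (by nlinarith) (a + τ) ⟨by linarith, le_rfl⟩
    rw [add_sub_cancel_left] at this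
    exact le_max_of_le_right this
  · have hT0 : 0 < T := by rw [hT]; exact div_pos (by linarith) hm
    have := le_sub_mul_of_slopeLiminfLE (hg' le_rfl) (hdec' le_rfl) hθL hm.le hmμ
      (b := a + T) (by nlinarith) (a + T) ⟨by linarith, le_rfl⟩
    rw [add_sub_cancel_left, hmT] at this
    exact le_max_of_le_left (hstay (a' := a + T) (by linarith) (by linarith) (by linarith))

end Comparison

theorem lipschitzWith_ciInf {ι α : Type*} [PseudoMetricSpace α] [Nonempty ι]
    {f : ι → α → ℝ} {K : NNReal} (hf : ∀ i, LipschitzWith K (f i))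
    (hbdd : ∀ x, BddBelow (range fun i => f i x)) :
    LipschitzWith K fun x => ⨅ i, f i x :=
  LipschitzWith.of_le_add_mul K fun x y => by
    rw [ciInf_add (hbdd y)]
    exact ciInf_mono (hbdd x) fun i => (hf i).le_add_mul x y

theorem max_le_max_add {k A B d : ℝ} (h : A ≤ B + d) (hd : 0 ≤ d) :
    max k A ≤ max k B + d := by
  rw [← max_add_add_right]
  exact max_le_max (by linarith) h

/-- The bound `max (1/(n+1)) (v - m n * τ)` valid while `v ≤ n + 1`, with the rate cut off
continuously as `v` crosses `n + 1`, so that `decayBound` is continuous in `v`. -/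
def decayTerm (m : ℕ → ℝ) (v τ : ℝ) (n : ℕ) : ℝ :=
  max (1 / (n + 1)) (v - m n * min 1 (max (n + 1 - v) 0) * τ)

def decayBound (m : ℕ → ℝ) (v τ : ℝ) : ℝ :=
  ⨅ n, decayTerm m v τ n

section DecayBound

variable {m : ℕ → ℝ} {v τ : ℝ}

theorem decayTerm_nonneg (n : ℕ) : 0 ≤ decayTerm m v τ n :=
  (by positivity : (0 : ℝ) ≤ 1 / (n + 1)).trans (le_max_left _ _)

theorem bddBelow_range_decayTerm : BddBelow (range (decayTerm m v τ)) :=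
  ⟨0, by rintro _ ⟨n, rfl⟩; exact decayTerm_nonneg n⟩

theorem decayBound_nonneg : 0 ≤ decayBound m v τ :=
  le_ciInf decayTerm_nonneg

theorem decayBound_le_decayTerm (n : ℕ) : decayBound m v τ ≤ decayTerm m v τ n :=
  ciInf_le bddBelow_range_decayTerm n

theorem le_decayBound {y : ℝ} (hm : ∀ n, 0 ≤ m n) (hτ : 0 ≤ τ)
    (h : ∀ n : ℕ, v ≤ n + 1 → y ≤ max (1 / ((n : ℝ) + 1)) (v - m n * τ)) :
    y ≤ decayBound m v τ := by
  refine le_ciInf fun n => ?_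
  rcases le_or_gt v (n + 1) with hv | hv
  · have hcut := mul_le_mul_of_nonneg_left (min_le_left 1 (max (n + 1 - v) 0)) (hm n)
    exact (h n hv).trans (max_le_max le_rfl (by nlinarith))
  · obtain ⟨k, hk⟩ := exists_nat_ge (v - 1)
    have hk1 : 1 / ((k : ℝ) + 1) ≤ 1 := by
      rw [div_le_one (by positivity)]
      linarith [k.cast_nonneg (α := ℝ)]
    have hcut : min 1 (max ((n : ℝ) + 1 - v) 0) = 0 := by
      rw [max_eq_right (by linarith), min_eq_right zero_le_one]
    have hyv : y ≤ v :=
      (h k (by linarith)).trans (max_le (by linarith) (by nlinarith [hm k]))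
    rw [decayTerm, hcut, mul_zero, zero_mul, sub_zero]
    exact hyv.trans (le_max_right _ _)

theorem decayBound_zero_left (hm : ∀ n, 0 ≤ m n) (hτ : 0 ≤ τ) : decayBound m 0 τ = 0 := by
  refine le_antisymm (ge_of_tendsto' tendsto_one_div_add_atTop_nhds_zero_nat fun n => ?_)
    decayBound_nonneg
  refine (decayBound_le_decayTerm n).trans (max_le le_rfl ?_)
  have : 0 ≤ m n * min 1 (max ((n : ℝ) + 1 - 0) 0) * τ := by
    have := hm n
    positivity
  linarith [(by positivity : (0 : ℝ) ≤ 1 / (n + 1))]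

theorem monotone_decayBound_left (hm : ∀ n, 0 ≤ m n) (hτ : 0 ≤ τ) :
    Monotone fun v => decayBound m v τ := by
  intro v v' hvv'
  refine ciInf_mono bddBelow_range_decayTerm fun n => max_le_max le_rfl ?_
  have hcut : min 1 (max ((n : ℝ) + 1 - v') 0) ≤ min 1 (max ((n : ℝ) + 1 - v) 0) :=
    min_le_min le_rfl (max_le_max (by linarith) le_rfl)
  have := mul_le_mul_of_nonneg_right (mul_le_mul_of_nonneg_left hcut (hm n)) hτ
  linarith

theorem antitone_decayBound_right (hm : ∀ n, 0 ≤ m n) :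
    Antitone fun τ => decayBound m v τ := by
  intro τ τ' hττ'
  refine ciInf_mono bddBelow_range_decayTerm fun n => max_le_max le_rfl ?_
  have : 0 ≤ m n * min 1 (max ((n : ℝ) + 1 - v) 0) := by
    have := hm n
    positivity
  nlinarith

theorem tendsto_decayBound_atTop (hm : ∀ n, 0 < m n) :
    Tendsto (fun τ => decayBound m v τ) atTop (𝓝 0) := by
  refine tendsto_order.2 ⟨fun ε hε => Eventually.of_forall fun τ =>
    hε.trans_le decayBound_nonneg, fun ε hε => ?_⟩
  obtain ⟨n, hn⟩ := exists_nat_gt (max v (1 / ε))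
  have hnv : v ≤ n := (le_max_left _ _).trans hn.le
  have hnε : 1 / ((n : ℝ) + 1) < ε := by
    rw [div_lt_iff₀ (by positivity)]
    have := (le_max_right v (1 / ε)).trans_lt hn
    rw [div_lt_iff₀ hε] at this
    nlinarith
  have hcut : min 1 (max ((n : ℝ) + 1 - v) 0) = 1 := by
    rw [max_eq_left (by linarith), min_eq_left (by linarith)]
  filter_upwards [eventually_ge_atTop (v / m n)] with τ hτ
  rw [div_le_iff₀ (hm n)] at hτ
  refine (decayBound_le_decayTerm n).trans_lt ?_
  have hpos : (0 : ℝ) < 1 / (n + 1) := by positivity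
  rw [decayTerm, hcut, mul_one, max_eq_left (by nlinarith)]
  exact hnε

theorem continuous_decayBound_left (hm0 : ∀ n, 0 ≤ m n) (hm1 : ∀ n, m n ≤ 1) (hτ : 0 ≤ τ) :
    Continuous fun v => decayBound m v τ := by
  refine (lipschitzWith_ciInf (K := Real.toNNReal (1 + τ)) (fun n => ?_)
    fun _ => bddBelow_range_decayTerm).continuous
  have hcut : LipschitzWith 1 fun v : ℝ => min 1 (max (n + 1 - v) 0) := by
    simpa using (((LipschitzWith.const (n + 1 : ℝ)).sub LipschitzWith.id).max_const 0).const_min 1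
  refine LipschitzWith.of_le_add_mul' _ fun v v' => max_le_max_add ?_ (by positivity)
  have h1 := hcut.dist_le_mul v' v
  rw [NNReal.coe_one, one_mul, Real.dist_eq, Real.dist_eq, abs_sub_comm v'] at h1
  have h2 : m n * τ * (min 1 (max (n + 1 - v') 0) - min 1 (max (n + 1 - v) 0)) ≤ τ * |v - v'| :=
    calc _ ≤ m n * τ * |v - v'| :=
          mul_le_mul_of_nonneg_left ((le_abs_self _).trans h1) (by have := hm0 n; positivity)
      _ ≤ τ * |v - v'| :=
          mul_le_mul_of_nonneg_right (mul_le_of_le_one_left hτ (hm1 n)) (abs_nonneg _)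
  rw [Real.dist_eq]
  linarith [le_abs_self (v - v')]

theorem continuous_decayBound_right (hm0 : ∀ n, 0 ≤ m n) (hm1 : ∀ n, m n ≤ 1) :
    Continuous fun τ => decayBound m v τ := by
  refine (lipschitzWith_ciInf (K := 1) (fun n => ?_) fun _ => bddBelow_range_decayTerm).continuous
  have hcut0 : 0 ≤ min 1 (max ((n : ℝ) + 1 - v) 0) := le_min zero_le_one (le_max_right _ _)
  have hcut1 : min 1 (max ((n : ℝ) + 1 - v) 0) ≤ 1 := min_le_left _ _
  refine LipschitzWith.of_le_add_mul 1 fun τ τ' => max_le_max_add ?_ (by simp)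
  rw [NNReal.coe_one, one_mul, Real.dist_eq]
  have hrate0 : 0 ≤ m n * min 1 (max ((n : ℝ) + 1 - v) 0) := mul_nonneg (hm0 n) hcut0
  have hrate1 : m n * min 1 (max ((n : ℝ) + 1 - v) 0) ≤ 1 :=
    mul_le_one₀ (hm1 n) hcut0 hcut1
  have : m n * min 1 (max ((n : ℝ) + 1 - v) 0) * (τ' - τ) ≤ |τ - τ'| :=
    calc _ ≤ m n * min 1 (max ((n : ℝ) + 1 - v) 0) * |τ - τ'| := by
          rw [abs_sub_comm]; exact mul_le_mul_of_nonneg_left (le_abs_self _) hrate0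
      _ ≤ |τ - τ'| := mul_le_of_le_one_left (abs_nonneg _) hrate1
  linarith

end DecayBound

theorem sub_le_decayBound_of_slopeLiminfLE {g μ : ℝ → ℝ} {m : ℕ → ℝ} {a θ v τ : ℝ}
    (hg : ContinuousOn g (Ici a)) (hdec : ∀ x ∈ Ici a, θ < g x → SlopeLiminfLE g x (-μ (g x)))
    (hθ : 0 ≤ θ) (hμ : ∀ s, 0 < s → 0 < μ s) (hm : ∀ n, 0 < m n)
    (hmμ : ∀ (n : ℕ) (s : ℝ), 1 / ((n : ℝ) + 1) ≤ s → s ≤ n + 1 → m n < μ s)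
    (hga : g a ≤ v) (hτ : 0 ≤ τ) : g (a + τ) - θ ≤ decayBound m v τ := by
  refine le_decayBound (fun n => (hm n).le) hτ fun n hn => ?_
  have := le_max_sub_mul_of_slopeLiminfLE (L := 1 / ((n : ℝ) + 1) + θ) hg hdec
    (fun s hs => hμ s (hθ.trans_lt hs)) (by linarith [(by positivity : (0 : ℝ) < 1 / (n + 1))])
    (hm n) (fun s hs₁ hs₂ => hmμ n s (by linarith) (by linarith)) hτ
  rw [sub_le_iff_le_add, ← max_add_add_right]
  exact this.trans (max_le_max le_rfl (by linarith))

theorem Monotone.apply_add_le {f : ℝ → ℝ} (hf : Monotone f) (hf0 : ∀ y, 0 ≤ y → 0 ≤ f y)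
    {a b : ℝ} (ha : 0 ≤ a) (hb : 0 ≤ b) : f (a + b) ≤ f (2 * a) + f (2 * b) := by
  rcases le_total a b with hab | hab
  · linarith [hf (by linarith : a + b ≤ 2 * b), hf0 (2 * a) (by linarith)]
  · linarith [hf (by linarith : a + b ≤ 2 * a), hf0 (2 * b) (by linarith)]

theorem ClassK.comp {f g : ℝ → ℝ} (hg : ClassK g) (hf : ClassK f) : ClassK (g ∘ f) where
  cont := hg.cont.comp hf.cont fun r hr => hf.nonneg r hr
  mono := fun _ hr _ hs hrs =>
    hg.mono (hf.nonneg _ hr) (hf.nonneg _ hs) (hf.mono hr hs hrs)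
  zero := by simp [hf.zero, hg.zero]
  nonneg := fun r hr => hg.nonneg _ (hf.nonneg r hr)

theorem ClassK.of_strictMono {f : ℝ → ℝ} (hf : StrictMono f) (hc : Continuous f)
    (h0 : f 0 = 0) : ClassK f where
  cont := hc.continuousOn
  mono := hf.strictMonoOn _
  zero := h0
  nonneg _ hr := h0 ▸ hf.monotone hr

theorem ClassK.strictMono_extend {g : ℝ → ℝ} (hg : ClassK g) :
    StrictMono fun r => if r < 0 then r else g r := by
  intro r s hrs
  by_cases hs : s < 0
  · simp [hs, hrs.trans hs, hrs]
  by_cases hr : r < 0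
  · simpa [hr, hs] using hr.trans_le (hg.nonneg s (not_lt.1 hs))
  · simpa [hr, hs] using hg.mono (not_lt.1 hr) (not_lt.1 hs) hrs

theorem ClassKInf.surjective_extend {g : ℝ → ℝ} (hg : ClassKInf g) :
    Function.Surjective fun r => if r < 0 then r else g r := by
  intro y
  by_cases hy : y < 0
  · exact ⟨y, by simp [hy]⟩
  obtain ⟨R, hR0, hRy⟩ := hg.unbounded y
  obtain ⟨r, hr, hgr⟩ := intermediate_value_Icc hR0 (hg.toClassK.cont.mono Icc_subset_Ici_self)
    ⟨by rw [hg.toClassK.zero]; exact not_lt.1 hy, hRy.le⟩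
  exact ⟨r, by simp [not_lt.2 hr.1, hgr]⟩

/-- Extending `g` by the identity on `(-∞, 0)` makes it an order isomorphism of `ℝ`; its
inverse inverts `g` on `[0, ∞)`. -/
def ClassKInf.orderIso {g : ℝ → ℝ} (hg : ClassKInf g) : ℝ ≃o ℝ :=
  StrictMono.orderIsoOfSurjective _ hg.toClassK.strictMono_extend hg.surjective_extend

theorem ClassKInf.orderIso_apply {g : ℝ → ℝ} (hg : ClassKInf g) {r : ℝ} (hr : 0 ≤ r) :
    hg.orderIso r = g r := by
  simp [ClassKInf.orderIso, not_lt.2 hr]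

theorem ClassKInf.orderIso_symm_zero {g : ℝ → ℝ} (hg : ClassKInf g) : hg.orderIso.symm 0 = 0 := by
  rw [OrderIso.symm_apply_eq, hg.orderIso_apply le_rfl, hg.toClassK.zero]

theorem ClassPD.exists_lt_on_Icc {μ : ℝ → ℝ} (hμ : ClassPD μ) :
    ∃ m : ℕ → ℝ, (∀ n, 0 < m n) ∧ (∀ n, m n ≤ 1) ∧
      ∀ (n : ℕ) (s : ℝ), 1 / ((n : ℝ) + 1) ≤ s → s ≤ n + 1 → m n < μ s := by
  have key (n : ℕ) : ∃ c, 0 < c ∧ c ≤ 1 ∧ ∀ s ∈ Icc (1 / ((n : ℝ) + 1)) (n + 1), c < μ s := by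
    have hlow : (0 : ℝ) < 1 / ((n : ℝ) + 1) := by positivity
    have hne : (Icc (1 / ((n : ℝ) + 1)) (n + 1)).Nonempty := nonempty_Icc.2 <| by
      rw [div_le_iff₀ (by positivity)]
      nlinarith [n.cast_nonneg (α := ℝ)]
    obtain ⟨p, hp, hmin⟩ := isCompact_Icc.exists_isMinOn hne
      (hμ.cont.mono fun s hs => hlow.le.trans hs.1)
    have hμp := hμ.pos p (hlow.trans_le hp.1)
    exact ⟨min (μ p / 2) 1, by positivity, min_le_right _ _, fun s hs =>
      (min_le_left _ _).trans_lt ((half_lt_self hμp).trans_le (hmin hs))⟩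
  choose m hm0 hm1 hmμ using key
  exact ⟨m, hm0, hm1, fun n s hs₁ hs₂ => hmμ n s ⟨hs₁, hs₂⟩⟩

theorem ClassKL.add_mul_exp {b : ℝ → ℝ → ℝ}
    (hcont₁ : ∀ t, 0 ≤ t → ContinuousOn (b · t) (Ici 0))
    (hmono₁ : ∀ t, 0 ≤ t → MonotoneOn (b · t) (Ici 0))
    (hzero : ∀ t, 0 ≤ t → b 0 t = 0)
    (hcont₂ : ∀ r, 0 < r → ContinuousOn (b r) (Ici 0))
    (hanti₂ : ∀ r, 0 < r → AntitoneOn (b r) (Ici 0))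
    (hlim₂ : ∀ r, 0 < r → Tendsto (b r) atTop (𝓝 0)) :
    ClassKL fun r t => b r t + r * Real.exp (-t) where
  classK t ht :=
    { cont := (hcont₁ t ht).add (by fun_prop)
      mono := fun r hr s hs hrs => add_lt_add_of_le_of_lt (hmono₁ t ht hr hs hrs.le)
        (mul_lt_mul_of_pos_right hrs (Real.exp_pos _))
      zero := by simp [hzero t ht]
      nonneg := fun r hr => add_nonneg (hzero t ht ▸ hmono₁ t ht (mem_Ici.2 le_rfl) hr hr)
        (by positivity) }
  contL r hr := (hcont₂ r hr).add (by fun_prop)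
  antiL r hr := fun t ht s hs hts => add_lt_add_of_le_of_lt (hanti₂ r hr ht hs hts.le)
    (mul_lt_mul_of_pos_left (Real.exp_lt_exp.2 (neg_lt_neg hts)) hr)
  tendstoL r hr := by
    simpa using (hlim₂ r hr).add (Real.tendsto_exp_neg_atTop_nhds_zero.const_mul r)

theorem classKL_decayBound {m : ℕ → ℝ} {ψ a : ℝ → ℝ} (hm0 : ∀ n, 0 < m n)
    (hm1 : ∀ n, m n ≤ 1) (hψ : Monotone ψ) (hψc : Continuous ψ) (hψ0 : ψ 0 = 0)
    (ha : ClassK a) : ClassKL fun r t => ψ (decayBound m (a r) t) + r * Real.exp (-t) := by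
  have hm0' : ∀ n, 0 ≤ m n := fun n => (hm0 n).le
  refine ClassKL.add_mul_exp (fun t ht => ?_) (fun t ht => ?_) (fun t ht => ?_)
    (fun r _ => ?_) (fun r _ => ?_) (fun r _ => ?_)
  · exact (hψc.comp (continuous_decayBound_left hm0' hm1 ht)).comp_continuousOn ha.cont
  · exact hψ.comp_monotoneOn ((monotone_decayBound_left hm0' ht).comp_monotoneOn
      (ha.mono.monotoneOn))
  · simp [ha.zero, decayBound_zero_left hm0' ht, hψ0]
  · exact (hψc.comp (continuous_decayBound_right hm0' hm1)).continuousOn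
  · exact (hψ.comp_antitone (antitone_decayBound_right hm0')).antitoneOn _
  · simpa [hψ0, Function.comp_def] using (hψc.tendsto 0).comp (tendsto_decayBound_atTop hm0)

namespace TVSystem

variable {X U : Type*} [NormedAddCommGroup X] [NormedAddCommGroup U] {S : TVSystem X U}
  {V : ℝ → X → ℝ} {t0 : ℝ} {x0 : X} {u : ℝ → U}

theorem continuousOn_comp_phi
    (hV : ContinuousOn (fun p : ℝ × X => V p.1 p.2) (Ici (0 : ℝ) ×ˢ univ)) (ht0 : 0 ≤ t0) :
    ContinuousOn (fun t => V t (S.phi t t0 x0 u)) {t | t0 ≤ t ∧ (t : EReal) < S.tm t0 x0 u} :=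
  hV.comp (continuousOn_id.prodMk (S.trajCont t0 ht0 x0 u)) fun _ ht =>
    ⟨ht0.trans ht.1, mem_univ _⟩

theorem slopeLiminfLE_of_lieDeriv_le {x c : ℝ} (ht0 : 0 ≤ t0) (hx : t0 ≤ x)
    (hxtm : (x : EReal) < S.tm t0 x0 u) (h : S.lieDeriv V u x (S.phi x t0 x0 u) ≤ c)
    (hc : c < 0) : SlopeLiminfLE (fun t => V t (S.phi t t0 x0 u)) x c := by
  intro r hr
  have hmap : map (x + ·) (𝓝[>] (0 : ℝ)) = 𝓝[>] x := by simp
  have htm : ∀ᶠ h in 𝓝[>] (0 : ℝ), ((x + h : ℝ) : EReal) < S.tm t0 x0 u :=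
    nhdsWithin_le_nhds <| ((continuous_coe_real_ereal.comp (continuous_const_add x)).tendsto' 0 x
      (by simp)).eventually_lt_const hxtm
  rw [← hmap, frequently_map]
  refine ((frequently_lt_of_limsup_le_of_neg h hc hr).and_eventually
    (htm.and self_mem_nhdsWithin)).mono fun h ⟨hs, htm, hpos⟩ => ?_
  rwa [slope_def_field, add_sub_cancel_left, ← S.cocycle t0 ht0 x0 u (x + h)
    (by linarith) htm x hx (by linarith)]

structure IsISSLyapunovFunction (S : TVSystem X U) (V : ℝ → X → ℝ) (α₁ α₂ κ μ : ℝ → ℝ) :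
    Prop where
  continuousOn : ContinuousOn (fun p : ℝ × X => V p.1 p.2) (Ici (0 : ℝ) ×ˢ univ)
  classKInf_lower : ClassKInf α₁
  classKInf_upper : ClassKInf α₂
  classK_gain : ClassK κ
  classPD_decay : ClassPD μ
  lower_le : ∀ t, 0 ≤ t → ∀ x, α₁ ‖x‖ ≤ V t x
  le_upper : ∀ t, 0 ≤ t → ∀ x, V t x ≤ α₂ ‖x‖
  lieDeriv_le : ∀ t, 0 ≤ t → ∀ x, ∀ u ∈ S.inputs,
    κ (S.unorm u) ≤ ‖x‖ → S.lieDeriv V u t x ≤ -μ (V t x)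

namespace IsISSLyapunovFunction

variable {α₁ α₂ κ μ : ℝ → ℝ} (hV : S.IsISSLyapunovFunction V α₁ α₂ κ μ)
include hV

theorem slopeLiminfLE (hu : u ∈ S.inputs) (ht0 : 0 ≤ t0) {x : ℝ} (hx : t0 ≤ x)
    (hxtm : (x : EReal) < S.tm t0 x0 u)
    (hθ : α₂ (κ (S.unorm u)) < V x (S.phi x t0 x0 u)) :
    SlopeLiminfLE (fun t => V t (S.phi t t0 x0 u)) x (-μ (V x (S.phi x t0 x0 u))) := by
  have hκ0 := hV.classK_gain.nonneg _ (S.unorm_nonneg u)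
  have hnorm : κ (S.unorm u) < ‖S.phi x t0 x0 u‖ :=
    (hV.classKInf_upper.toClassK.mono.lt_iff_lt hκ0 (norm_nonneg _)).1
      (hθ.trans_le (hV.le_upper x (ht0.trans hx) _))
  have hVpos := (hV.classKInf_upper.toClassK.nonneg _ hκ0).trans_lt hθ
  exact slopeLiminfLE_of_lieDeriv_le ht0 hx hxtm
    (hV.lieDeriv_le x (ht0.trans hx) _ u hu hnorm.le)
    (neg_neg_iff_pos.2 (hV.classPD_decay.pos _ hVpos))

/-- By BIC, a finite escape time would force `‖φ‖`, hence `V`, above every bound; but `V`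
cannot rise above `max (V t0 x0) (α₂ (κ ‖u‖) + 1)`. -/
theorem forwardComplete (hBIC : S.BIC) : S.ForwardComplete := by
  intro t0 ht0 x0 u hu
  by_contra htop
  set θ := α₂ (κ (S.unorm u))
  set g := fun t => V t (S.phi t t0 x0 u)
  have hθ : 0 ≤ θ :=
    hV.classKInf_upper.toClassK.nonneg _ (hV.classK_gain.nonneg _ (S.unorm_nonneg u))
  obtain ⟨R, hR0, hR⟩ := hV.classKInf_lower.unbounded (max (g t0) (θ + 1))
  obtain ⟨t, ht0t, httm, hRt⟩ := hBIC t0 ht0 x0 u hu htop (R + 1) (by linarith)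
  have hle_tm {s : ℝ} (hs : s ∈ Icc t0 t) : (s : EReal) < S.tm t0 x0 u :=
    (EReal.coe_le_coe_iff.2 hs.2).trans_lt httm
  have hgt := le_max_of_slopeLiminfLE
    ((continuousOn_comp_phi hV.continuousOn ht0).mono fun s hs => ⟨hs.1, hle_tm hs⟩)
    (fun s hs hθs => hV.slopeLiminfLE hu ht0 hs.1 (hle_tm (Ico_subset_Icc_self hs)) hθs)
    (lt_add_one θ) (hV.classPD_decay.pos _ (by linarith [le_max_right (g t0) (θ + 1)]))
    t ⟨ht0t, le_rfl⟩
  have := hV.classKInf_lower.toClassK.mono hR0 (norm_nonneg _) (by linarith : R < _)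
  linarith [hV.lower_le t (ht0.trans ht0t) (S.phi t t0 x0 u)]

theorem le_decayBound_add (hFC : S.ForwardComplete) {m : ℕ → ℝ} (hm : ∀ n, 0 < m n)
    (hmμ : ∀ (n : ℕ) (s : ℝ), 1 / ((n : ℝ) + 1) ≤ s → s ≤ n + 1 → m n < μ s)
    (ht0 : 0 ≤ t0) (hu : u ∈ S.inputs) {t : ℝ} (ht : t0 ≤ t) :
    V t (S.phi t t0 x0 u) ≤ decayBound m (α₂ ‖x0‖) (t - t0) + α₂ (κ (S.unorm u)) := by
  have htop := hFC t0 ht0 x0 u hu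
  have hθ : 0 ≤ α₂ (κ (S.unorm u)) :=
    hV.classKInf_upper.toClassK.nonneg _ (hV.classK_gain.nonneg _ (S.unorm_nonneg u))
  have := sub_le_decayBound_of_slopeLiminfLE (g := fun s => V s (S.phi s t0 x0 u))
    ((continuousOn_comp_phi hV.continuousOn ht0).mono fun s hs => ⟨hs, by simp [htop]⟩)
    (fun s hs => hV.slopeLiminfLE hu ht0 hs (by simp [htop])) hθ hV.classPD_decay.pos hm hmμ
    (by simpa [S.identity t0 ht0] using hV.le_upper t0 ht0 x0) (sub_nonneg.2 ht)
  rwa [add_sub_cancel, sub_le_iff_le_add] at this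

end IsISSLyapunovFunction

end TVSystem

theorem stmt0_general {X U : Type*} [NormedAddCommGroup X] [NormedAddCommGroup U]
    (S : TVSystem X U) (hBIC : S.BIC)
    (V : ℝ → X → ℝ)
    (hVcont : ContinuousOn (fun p : ℝ × X => V p.1 p.2) (Set.Ici (0:ℝ) ×ˢ (Set.univ : Set X)))
    (α₁ α₂ : ℝ → ℝ) (hα₁ : ClassKInf α₁) (hα₂ : ClassKInf α₂)
    (κ : ℝ → ℝ) (hκ : ClassK κ)
    (μ : ℝ → ℝ) (hμ : ClassPD μ)
    (hsand : ∀ t : ℝ, 0 ≤ t → ∀ x : X, α₁ ‖x‖ ≤ V t x ∧ V t x ≤ α₂ ‖x‖)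
    (hdecay : ∀ t : ℝ, 0 ≤ t → ∀ x : X, ∀ u ∈ S.inputs,
      κ (S.unorm u) ≤ ‖x‖ → S.lieDeriv V u t x ≤ - μ (V t x)) :
    S.ISS := by
  have hV : S.IsISSLyapunovFunction V α₁ α₂ κ μ := ⟨hVcont, hα₁, hα₂, hκ, hμ,
    fun t ht x => (hsand t ht x).1, fun t ht x => (hsand t ht x).2, hdecay⟩
  have hFC := hV.forwardComplete hBIC
  obtain ⟨m, hm0, hm1, hmμ⟩ := hμ.exists_lt_on_Icc
  set e := hα₁.orderIso
  set ψ : ℝ → ℝ := fun y => e.symm (2 * y)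
  have hψ : StrictMono ψ := e.symm.strictMono.comp (strictMono_mul_left_of_pos two_pos)
  have hψc : Continuous ψ := e.symm.continuous.comp (continuous_const_mul 2)
  have hψ0 : ψ 0 = 0 := by simp [ψ, e, hα₁.orderIso_symm_zero]
  refine ⟨hFC, _, ψ ∘ α₂ ∘ κ, classKL_decayBound hm0 hm1 hψ.monotone hψc hψ0 hα₂.toClassK,
    (ClassK.of_strictMono hψ hψc hψ0).comp (hα₂.toClassK.comp hκ), fun t0 ht0 x0 u hu t ht => ?_⟩
  have hG := decayBound_nonneg (m := m) (v := α₂ ‖x0‖) (τ := t - t0)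
  have hθ := hα₂.toClassK.nonneg _ (hκ.nonneg _ (S.unorm_nonneg u))
  calc ‖S.phi t t0 x0 u‖ ≤ e.symm (V t (S.phi t t0 x0 u)) := by
        rw [OrderIso.le_symm_apply, hα₁.orderIso_apply (norm_nonneg _)]
        exact hV.lower_le t (ht0.trans ht) _
    _ ≤ e.symm (decayBound m (α₂ ‖x0‖) (t - t0) + α₂ (κ (S.unorm u))) :=
        e.symm.monotone (hV.le_decayBound_add hFC hm0 hmμ ht0 hu ht)
    _ ≤ ψ (decayBound m (α₂ ‖x0‖) (t - t0)) + ψ (α₂ (κ (S.unorm u))) :=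
        e.symm.monotone.apply_add_le
          (fun y hy => hα₁.orderIso_symm_zero ▸ e.symm.monotone hy) hG hθ
    _ ≤ _ := by
        have : 0 ≤ ‖x0‖ * Real.exp (-(t - t0)) := by positivity
        simp only [Function.comp_apply]
        linarith

/-- Existence of a coercive ISS Lyapunov function (in implication form) for a
time-varying control system with the BIC property implies ISS. -/
theorem stmt0 {X U : Type*} [NormedAddCommGroup X] [NormedAddCommGroup U]
    (S : TVSystem X U) (hBIC : S.BIC)
    (V : ℝ → X → ℝ)
    (hVcont : ContinuousOn (fun p : ℝ × X => V p.1 p.2) (Set.Ici (0:ℝ) ×ˢ (Set.univ : Set X)))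
    (hVnonneg : ∀ t : ℝ, 0 ≤ t → ∀ x : X, 0 ≤ V t x)
    (hV0 : ∀ t : ℝ, 0 ≤ t → V t 0 = 0)
    (α₁ α₂ : ℝ → ℝ) (hα₁ : ClassKInf α₁) (hα₂ : ClassKInf α₂)
    (κ : ℝ → ℝ) (hκ : ClassK κ)
    (μ : ℝ → ℝ) (hμ : ClassPD μ)
    (hsand : ∀ t : ℝ, 0 ≤ t → ∀ x : X, α₁ ‖x‖ ≤ V t x ∧ V t x ≤ α₂ ‖x‖)
    (hdecay : ∀ t : ℝ, 0 ≤ t → ∀ x : X, ∀ u ∈ S.inputs,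
      κ (S.unorm u) ≤ ‖x‖ → S.lieDeriv V u t x ≤ - μ (V t x)) :
    S.ISS :=
  stmt0_general S hBIC V hVcont α₁ α₂ hα₁ hα₂ κ hκ μ hμ hsand hdecay
end
end

section
/- Let {W(t,t₀)}_{t≥t₀≥0} be a strongly continuous evolution family on a Banach space X satisfying sup{‖W(t,t₀)‖ : t₀≥0, t∈[t₀,t₀+1]} = K < ∞. If {W(t,t₀)} is uniformly attractive, then it is uniformly stable, and hence uniformly asymptotically stable. -/
open Filter Topology Set MeasureTheory
open scoped RealInnerProductSpace

noncomputable section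

/-- Strongly continuous evolution family `{W(t,s)}_{t ≥ s ≥ 0}`. -/
structure EvolutionFamily {X : Type*} [NormedAddCommGroup X] [NormedSpace ℝ X]
    (W : ℝ → ℝ → X →L[ℝ] X) : Prop where
  idOn : ∀ t : ℝ, 0 ≤ t → ∀ x : X, W t t x = x
  comp : ∀ t r s : ℝ, 0 ≤ s → s ≤ r → r ≤ t → ∀ x : X, W t s x = W t r (W r s x)
  strongCont : ∀ x : X,
    ContinuousOn (fun p : ℝ × ℝ => W p.1 p.2 x) {p : ℝ × ℝ | 0 ≤ p.2 ∧ p.2 ≤ p.1}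

/-- Uniform stability of an evolution family. -/
def UniformlyStable {X : Type*} [NormedAddCommGroup X] [NormedSpace ℝ X]
    (W : ℝ → ℝ → X →L[ℝ] X) : Prop :=
  ∃ N : ℝ, 0 < N ∧ ∀ t0 t : ℝ, 0 ≤ t0 → t0 ≤ t → ‖W t t0‖ ≤ N

/-- Uniform attractivity of an evolution family. -/
def UniformlyAttractive {X : Type*} [NormedAddCommGroup X] [NormedSpace ℝ X]
    (W : ℝ → ℝ → X →L[ℝ] X) : Prop :=
  ∀ ε : ℝ, 0 < ε → ∃ T : ℝ, ∀ t0 t : ℝ, 0 ≤ t0 → t0 + T ≤ t → ‖W t t0‖ ≤ ε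

/-- Uniform exponential stability of an evolution family. -/
def UniformlyExpStable {X : Type*} [NormedAddCommGroup X] [NormedSpace ℝ X]
    (W : ℝ → ℝ → X →L[ℝ] X) : Prop :=
  ∃ k w : ℝ, 0 < k ∧ 0 < w ∧
    ∀ s t : ℝ, 0 ≤ s → s ≤ t → ‖W t s‖ ≤ k * Real.exp (-w * (t - s))


/-- If an evolution family with finite sup `K` of `‖W(t,t0)‖` over `t ∈ [t0,t0+1]`
is uniformly attractive, then it is uniformly stable, hence uniformly asymptotically
stable. -/
theorem stmt4 {X : Type*} [NormedAddCommGroup X] [NormedSpace ℝ X]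
    (W : ℝ → ℝ → X →L[ℝ] X) (hW : EvolutionFamily W)
    (K : ℝ)
    (hK : IsLUB {r : ℝ | ∃ t0 t : ℝ, 0 ≤ t0 ∧ t0 ≤ t ∧ t ≤ t0 + 1 ∧ r = ‖W t t0‖} K)
    (hatt : UniformlyAttractive W) :
    UniformlyStable W ∧ (UniformlyStable W ∧ UniformlyAttractive W) := by
  have hub := hK.1
  set mK : ℝ := max K 1 with hmK
  have hmK1 : (1:ℝ) ≤ mK := le_max_right _ _
  have claim : ∀ n : ℕ, ∀ t0 t : ℝ, 0 ≤ t0 → t0 ≤ t → t ≤ t0 + n →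
      ‖W t t0‖ ≤ mK ^ n := by
    intro n
    induction n with
    | zero =>
      intro t0 t ht0 h1 h2
      have ht : t0 = t := by push_cast at h2; linarith
      subst ht
      have hid : W t0 t0 = ContinuousLinearMap.id ℝ X :=
        ContinuousLinearMap.ext (hW.idOn t0 ht0)
      simpa [hid] using ContinuousLinearMap.norm_id_le (𝕜 := ℝ) (E := X)
    | succ n ih =>
      intro t0 t ht0 h1 h2
      by_cases h : t ≤ t0 + n
      · calc ‖W t t0‖ ≤ mK ^ n := ih t0 t ht0 h1 h
          _ ≤ mK ^ (n + 1) := pow_le_pow_right₀ hmK1 (Nat.le_succ n)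
      · push_neg at h
        set r : ℝ := t0 + n with hr
        have hr0 : 0 ≤ r := by positivity
        have hsr : t0 ≤ r := by simp [hr]
        have hrt : r ≤ t := le_of_lt h
        have ht1 : t ≤ r + 1 := by push_cast at h2 ⊢; linarith
        have hKr : ‖W t r‖ ≤ mK :=
          le_trans (hub ⟨r, t, hr0, hrt, ht1, rfl⟩) (le_max_left _ _)
        have hIH : ‖W r t0‖ ≤ mK ^ n := ih t0 r ht0 hsr (le_refl _)
        have hmn : (0:ℝ) ≤ mK ^ (n+1) := by positivity
        apply ContinuousLinearMap.opNorm_le_bound _ hmn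
        intro x
        rw [hW.comp t r t0 ht0 hsr hrt x]
        calc ‖W t r (W r t0 x)‖ ≤ ‖W t r‖ * ‖W r t0 x‖ :=
              ContinuousLinearMap.le_opNorm _ _
          _ ≤ mK * (‖W r t0‖ * ‖x‖) := by
              apply mul_le_mul hKr (ContinuousLinearMap.le_opNorm _ _)
                (norm_nonneg _) (le_trans zero_le_one hmK1)
          _ ≤ mK * (mK ^ n * ‖x‖) := by
              have := mul_le_mul_of_nonneg_right hIH (norm_nonneg x)
              nlinarith [norm_nonneg x]
          _ = mK ^ (n + 1) * ‖x‖ := by ring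
  obtain ⟨T, hT⟩ := hatt 1 one_pos
  set T' : ℝ := max T 0 with hT'
  set n : ℕ := ⌈T'⌉₊ with hn
  set N : ℝ := max 1 (mK ^ n) with hN
  have hstable : UniformlyStable W := by
    refine ⟨N, lt_of_lt_of_le one_pos (le_max_left _ _), ?_⟩
    intro t0 t ht0 h1
    by_cases h : t0 + T ≤ t
    · exact le_trans (hT t0 t ht0 h) (le_max_left _ _)
    · push_neg at h
      have : t ≤ t0 + n := by
        have h2 : T' ≤ (n : ℝ) := Nat.le_ceil T'
        have h3 : T ≤ T' := le_max_left _ _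
        linarith
      exact le_trans (claim n t0 t ht0 h1 this) (le_max_right _ _)
  exact ⟨hstable, hstable, hatt⟩
end
end

section
/- Let X be a Hilbert space, U a Banach space, A:ℝ≥0→L(X) continuous and uniformly bounded in the uniform operator topology, and B∈C(ℝ≥0,L(U,X)) with b̃ := sup_{t≥0}‖B(t)‖ < ∞. Suppose P:ℝ≥0→L(X) is a continuously differentiable, bounded, coercive positive operator-valued function satisfying A(t)*P(t)+P(t)A(t)+Ṗ(t) = −I for all t≥0, with coercivity constant μ₁>0 and p := sup_{t≥0}‖P(t)‖. Then V(t,x) := ⟨P(t)x,x⟩ satisfies μ₁‖x‖²_X ≤ V(t,x) ≤ p‖x‖²_X for all t≥0, x∈X, and along every piecewise classical solution x(·) of ẋ(t)=A(t)x(t)+B(t)u(t) with input u∈PC(ℝ≥0,U), at every point of differentiability and for every η>0, d/dt V(t,x(t)) ≤ −‖x(t)‖²_X + p b̃ η ‖x(t)‖²_X + (p b̃/η)‖u‖²_𝒰; consequently (choosing η < (p b̃)⁻¹) V is an ISS Lyapunov function and the system ẋ=A(t)x+B(t)u is ISS. -/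
/-!
Along a solution, `d/dt ⟪P(t)x, x⟫ = ⟪Ṗx, x⟫ + 2⟪P(Ax + Bu), x⟫`, and the Lyapunov equation
`A*P + PA + Ṗ = -I` collapses everything except the input term to `-‖x‖²`. Bounding the input
term by `2 p b̃ ‖u‖ ‖x‖` and splitting it with Young's inequality gives the dissipation estimate.
With `η = 1/2` and `V ≤ q‖x‖²` (`q = max p μ₁`) it becomes `V̇ ≤ -V/(2q) + 2(p b̃)²‖u‖²`.
A Grönwall argument that tolerates the locally finite set where the solution is not
differentiable gives `V(t) ≤ e^{-(t-t₀)/(2q)} V(t₀) + 4q(p b̃)²‖u‖²`, and coercivity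
`μ₁‖x‖² ≤ V` turns this into an ISS estimate with an exponential `β` and a linear `γ`.
-/

open Filter Topology Set MeasureTheory
open scoped RealInnerProductSpace

noncomputable section

/-- Globally bounded, piecewise right-continuous input: bounded, right-continuous
everywhere, and with only finitely many discontinuities in every compact interval. -/
structure IsPC {U : Type*} [NormedAddCommGroup U] (u : ℝ → U) : Prop where
  bounded : ∃ C : ℝ, ∀ s : ℝ, ‖u s‖ ≤ C
  rightCont : ∀ t : ℝ, ContinuousWithinAt u (Set.Ici t) t
  locFinite : ∀ a b : ℝ, {s ∈ Set.Icc a b | ¬ ContinuousAt u s}.Finite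

/-- The sup-norm `sup_{s ≥ 0} ‖u s‖` of an input. -/
def pcNorm {U : Type*} [NormedAddCommGroup U] (u : ℝ → U) : ℝ :=
  sSup ((fun s => ‖u s‖) '' Set.Ici 0)

/-- Piecewise classical solution of `ẋ(t) = f(t, x(t))` on `[t0,∞)`: continuous,
and differentiable satisfying the ODE away from a locally finite set. -/
def IsPCSol {X : Type*} [NormedAddCommGroup X] [NormedSpace ℝ X]
    (f : ℝ → X → X) (t0 : ℝ) (x : ℝ → X) : Prop :=
  ContinuousOn x (Set.Ici t0) ∧
  ∃ D : Set ℝ, (∀ a b : ℝ, (D ∩ Set.Icc a b).Finite) ∧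
    ∀ t ∈ Set.Ioi t0 \ D, HasDerivAt x (f t (x t)) t

open Real ContinuousLinearMap

theorem eventually_nhdsGT_notMem_of_locallyFinite {D : Set ℝ}
    (hD : ∀ a b : ℝ, (D ∩ Icc a b).Finite) (x : ℝ) : ∀ᶠ z in 𝓝[>] x, z ∉ D := by
  have hF : ((D ∩ Icc x (x + 1)) \ {x}).Finite := (hD x (x + 1)).sdiff
  have hnear : ∀ᶠ z in 𝓝 x, z ∉ (D ∩ Icc x (x + 1)) \ {x} :=
    hF.isClosed.isOpen_compl.mem_nhds fun h => h.2 rfl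
  filter_upwards [nhdsWithin_le_nhds hnear, Ioo_mem_nhdsGT (lt_add_one x)] with z hz hzI hzD
  exact hz ⟨⟨hzD, hzI.1.le, hzI.2.le⟩, hzI.1.ne'⟩

theorem le_gronwallBound_of_hasDerivAt_off_locallyFinite {f : ℝ → ℝ} {K ε δ a b : ℝ}
    {D : Set ℝ} (hD : ∀ c d : ℝ, (D ∩ Icc c d).Finite) (hf : ContinuousOn f (Icc a b))
    (hd : ∀ s ∈ Ioo a b, s ∉ D → ∃ d, HasDerivAt f d s ∧ d ≤ K * f s + ε) (ha : f a ≤ δ) :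
    ∀ x ∈ Icc a b, f x ≤ gronwallBound δ K ε (x - a) := by
  refine le_gronwallBound_of_liminf_deriv_right_le (f' := fun s => K * f s + ε) hf ?_ ha
    fun _ _ => le_rfl
  intro x hx r hr
  have hbound : ∀ᶠ s in 𝓝[>] x, K * f s + ε < r := by
    rw [← nhdsWithin_Ioo_eq_nhdsGT hx.2]
    exact ((((hf x (Ico_subset_Icc_self hx)).const_mul K).add_const ε).mono
      (Ioo_subset_Icc_self.trans (Icc_subset_Icc_left hx.1))).eventually_lt_const hr
  obtain ⟨c, hxc, hc⟩ := mem_nhdsGT_iff_exists_Ioo_subset.1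
    ((hbound.and (eventually_nhdsGT_notMem_of_locallyFinite hD x)).and (Ioo_mem_nhdsGT hx.2))
  refine Eventually.frequently ?_
  filter_upwards [Ioo_mem_nhdsGT hxc] with z hz
  -- On `(x, z)` there are no exceptional points, so the mean value theorem applies.
  have hderiv : ∀ s ∈ Ioo x z, DifferentiableAt ℝ f s ∧ deriv f s < r := by
    intro s hs
    obtain ⟨⟨hsr, hsD⟩, hsb⟩ := hc ⟨hs.1, hs.2.trans hz.2⟩
    obtain ⟨d, hfd, hdle⟩ := hd s ⟨hx.1.trans_lt hsb.1, hsb.2⟩ hsD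
    exact ⟨hfd.differentiableAt, hfd.deriv ▸ hdle.trans_lt hsr⟩
  have hzb : z ≤ b := (hc hz).2.2.le
  have hmvt := (convex_Icc x z).image_sub_lt_mul_sub_of_deriv_lt
    (hf.mono (Icc_subset_Icc hx.1 hzb))
    (by rw [interior_Icc]; exact fun s hs => (hderiv s hs).1.differentiableWithinAt)
    (by rw [interior_Icc]; exact fun s hs => (hderiv s hs).2)
    x (left_mem_Icc.2 hz.1.le) z (right_mem_Icc.2 hz.1.le) hz.1
  rwa [inv_mul_lt_iff₀ (sub_pos.2 hz.1), mul_comm]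

theorem le_mul_exp_add_of_hasDerivAt_off_locallyFinite {f : ℝ → ℝ} {k ε a b : ℝ} {D : Set ℝ}
    (hk : 0 < k) (hε : 0 ≤ ε) (hab : a ≤ b) (hD : ∀ c d : ℝ, (D ∩ Icc c d).Finite)
    (hf : ContinuousOn f (Icc a b))
    (hd : ∀ s ∈ Ioo a b, s ∉ D → ∃ d, HasDerivAt f d s ∧ d ≤ -k * f s + ε) :
    f b ≤ f a * exp (-k * (b - a)) + ε / k := by
  have h := le_gronwallBound_of_hasDerivAt_off_locallyFinite hD hf hd le_rfl b ⟨hab, le_rfl⟩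
  rw [gronwallBound_of_K_ne_0 (neg_ne_zero.2 hk.ne')] at h
  have : 0 ≤ ε / k * exp (-k * (b - a)) := by positivity
  calc f b ≤ f a * exp (-k * (b - a)) + ε / -k * (exp (-k * (b - a)) - 1) := h
    _ ≤ f a * exp (-k * (b - a)) + ε / k := by rw [div_neg]; linarith

theorem norm_le_of_quadratic_lyapunov {E : Type*} [NormedAddCommGroup E] {x : ℝ → E}
    {V : ℝ → ℝ} {D : Set ℝ} {a b k c t₀ t : ℝ} (ha : 0 < a) (hb : 0 ≤ b) (hk : 0 < k)
    (hc : 0 ≤ c) (ht : t₀ ≤ t) (hD : ∀ c d : ℝ, (D ∩ Icc c d).Finite)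
    (hV : ContinuousOn V (Icc t₀ t)) (hlow : a * ‖x t‖ ^ 2 ≤ V t) (hup : V t₀ ≤ b * ‖x t₀‖ ^ 2)
    (hd : ∀ s ∈ Ioo t₀ t, s ∉ D → ∃ d, HasDerivAt V d s ∧ d ≤ -k * V s + c) :
    ‖x t‖ ≤ √(b / a) * exp (-(k / 2 * (t - t₀))) * ‖x t₀‖ + √(c / (k * a)) := by
  have hdecay := le_mul_exp_add_of_hasDerivAt_off_locallyFinite hk hc ht hD hV hd
  have hexp : exp (-(k / 2 * (t - t₀))) ^ 2 = exp (-k * (t - t₀)) := by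
    rw [← exp_nat_mul]; ring_nf
  have hsq : ‖x t‖ ^ 2 ≤ (√(b / a) * exp (-(k / 2 * (t - t₀))) * ‖x t₀‖) ^ 2 + √(c / (k * a)) ^ 2 := by
    rw [mul_pow, mul_pow, sq_sqrt (by positivity), sq_sqrt (by positivity), hexp]
    refine le_of_mul_le_mul_left ?_ ha
    have : a * (b / a * exp (-k * (t - t₀)) * ‖x t₀‖ ^ 2 + c / (k * a)) =
        b * ‖x t₀‖ ^ 2 * exp (-k * (t - t₀)) + c / k := by
      field_simp
    rw [this]
    nlinarith [exp_pos (-k * (t - t₀))]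
  refine (pow_le_pow_iff_left₀ (norm_nonneg _) (by positivity) two_ne_zero).1 (hsq.trans ?_)
  nlinarith [mul_nonneg (mul_nonneg (mul_nonneg (sqrt_nonneg (b / a))
    (exp_pos (-(k / 2 * (t - t₀)))).le) (norm_nonneg (x t₀))) (sqrt_nonneg (c / (k * a)))]

theorem two_mul_le_mul_sq_add_sq_div {η : ℝ} (hη : 0 < η) (a b : ℝ) :
    2 * a * b ≤ η * a ^ 2 + b ^ 2 / η := by
  have : η * a ^ 2 + b ^ 2 / η - 2 * a * b = (η * a - b) ^ 2 / η := by
    field_simp; ring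
  nlinarith [div_nonneg (sq_nonneg (η * a - b)) hη.le]

theorem classK_const_mul {k : ℝ} (hk : 0 < k) : ClassK (fun r => k * r) where
  cont := (continuous_const_mul k).continuousOn
  mono := fun _ _ _ _ h => mul_lt_mul_of_pos_left h hk
  zero := mul_zero k
  nonneg := fun _ hr => mul_nonneg hk.le hr

theorem classKL_mul_exp {C k : ℝ} (hC : 0 < C) (hk : 0 < k) :
    ClassKL (fun r t => C * exp (-(k * t)) * r) where
  classK _ _ := classK_const_mul (by positivity)
  contL _ _ := by fun_prop
  antiL r hr s _ t _ hst := by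
    dsimp only
    gcongr
  tendstoL r _ := by
    simpa using ((tendsto_exp_neg_atTop_nhds_zero.comp
      (tendsto_id.const_mul_atTop hk)).const_mul C).mul_const r

theorem IsPC.norm_le_pcNorm {U : Type*} [NormedAddCommGroup U] {u : ℝ → U} (hu : IsPC u)
    {s : ℝ} (hs : 0 ≤ s) : ‖u s‖ ≤ pcNorm u := by
  obtain ⟨C, hC⟩ := hu.bounded
  exact le_csSup ⟨C, by rintro _ ⟨v, -, rfl⟩; exact hC v⟩ ⟨s, hs, rfl⟩

theorem IsPC.pcNorm_nonneg {U : Type*} [NormedAddCommGroup U] {u : ℝ → U} (hu : IsPC u) :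
    0 ≤ pcNorm u :=
  (norm_nonneg _).trans (hu.norm_le_pcNorm le_rfl)

section Operators

variable {E F : Type*} [NormedAddCommGroup E] [InnerProductSpace ℝ E]

theorem inner_apply_self_le (T : E →L[ℝ] E) (y : E) : ⟪T y, y⟫ ≤ ‖T‖ * ‖y‖ ^ 2 :=
  calc ⟪T y, y⟫ ≤ ‖T y‖ * ‖y‖ := real_inner_le_norm _ _
    _ ≤ ‖T‖ * ‖y‖ * ‖y‖ := by gcongr; exact T.le_opNorm y
    _ = ‖T‖ * ‖y‖ ^ 2 := by ring

theorem inner_apply_apply_le [NormedAddCommGroup F] [NormedSpace ℝ F] (T : E →L[ℝ] E)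
    (S : F →L[ℝ] E) (v : F) (y : E) : ⟪T (S v), y⟫ ≤ ‖T‖ * ‖S‖ * ‖v‖ * ‖y‖ :=
  calc ⟪T (S v), y⟫ ≤ ‖T (S v)‖ * ‖y‖ := real_inner_le_norm _ _
    _ ≤ ‖T‖ * (‖S‖ * ‖v‖) * ‖y‖ := by gcongr; exact T.le_opNorm_of_le (S.le_opNorm v)
    _ = ‖T‖ * ‖S‖ * ‖v‖ * ‖y‖ := by ring

variable [CompleteSpace E]

theorem inner_apply_self_add_two_mul_eq_of_lyapunov {A P P' : E →L[ℝ] E} (hP : IsSelfAdjoint P)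
    (hL : adjoint A ∘L P + P ∘L A + P' = -ContinuousLinearMap.id ℝ E) (y : E) :
    ⟪P' y, y⟫ + 2 * ⟪P (A y), y⟫ = -‖y‖ ^ 2 := by
  have h := congrArg (fun T : E →L[ℝ] E => ⟪T y, y⟫) hL
  simp only [add_apply, coe_comp, Function.comp_apply, neg_apply, coe_id', id_eq,
    inner_add_left, inner_neg_left, adjoint_inner_left, real_inner_self_eq_norm_sq] at h
  have hsymm : ⟪P y, A y⟫ = ⟪P (A y), y⟫ := by rw [hP.isSymmetric.apply_clm, real_inner_comm]
  linarith

theorem HasDerivAt.inner_apply_self {P : ℝ → E →L[ℝ] E} {P'₀ : E →L[ℝ] E} {x : ℝ → E}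
    {x' : E} {t : ℝ} (hP : HasDerivAt P P'₀ t) (hx : HasDerivAt x x' t)
    (hsa : IsSelfAdjoint (P t)) :
    HasDerivAt (fun s => ⟪P s (x s), x s⟫) (⟪P'₀ (x t), x t⟫ + 2 * ⟪P t x', x t⟫) t := by
  refine ((hP.clm_apply hx).inner ℝ hx).congr_deriv ?_
  rw [hsa.isSymmetric.apply_clm, inner_add_left, real_inner_comm ((P t) x') (x t)]
  ring

theorem HasDerivAt.inner_apply_self_of_lyapunov {A P'₀ : E →L[ℝ] E} {P : ℝ → E →L[ℝ] E}
    {x : ℝ → E} {w : E} {t : ℝ} (hP : HasDerivAt P P'₀ t) (hsa : IsSelfAdjoint (P t))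
    (hL : adjoint A ∘L P t + P t ∘L A + P'₀ = -ContinuousLinearMap.id ℝ E)
    (hx : HasDerivAt x (A (x t) + w) t) :
    HasDerivAt (fun s => ⟪P s (x s), x s⟫) (-‖x t‖ ^ 2 + 2 * ⟪P t w, x t⟫) t := by
  refine (hP.inner_apply_self hx hsa).congr_deriv ?_
  rw [map_add, inner_add_left, ← inner_apply_self_add_two_mul_eq_of_lyapunov hsa hL (x t)]
  ring

end Operators

theorem exists_hasDerivAt_inner_apply_self_le_of_lyapunov {E U : Type*} [NormedAddCommGroup E]
    [InnerProductSpace ℝ E] [CompleteSpace E] [NormedAddCommGroup U] [NormedSpace ℝ U]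
    {A P'₀ : E →L[ℝ] E} {B : U →L[ℝ] E} {P : ℝ → E →L[ℝ] E} {x : ℝ → E} {v : U} {t p b r : ℝ}
    (hP : HasDerivAt P P'₀ t) (hsa : IsSelfAdjoint (P t))
    (hL : adjoint A ∘L P t + P t ∘L A + P'₀ = -ContinuousLinearMap.id ℝ E)
    (hPp : ‖P t‖ ≤ p) (hBb : ‖B‖ ≤ b) (hv : ‖v‖ ≤ r) (hx : HasDerivAt x (A (x t) + B v) t) :
    ∃ d, HasDerivAt (fun s => ⟪P s (x s), x s⟫) d t ∧ d ≤ -‖x t‖ ^ 2 + 2 * (p * b * r) * ‖x t‖ := by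
  refine ⟨_, hP.inner_apply_self_of_lyapunov hsa hL hx, ?_⟩
  have hp : 0 ≤ p := (norm_nonneg _).trans hPp
  have hb : 0 ≤ b := (norm_nonneg _).trans hBb
  have hnorms : ‖P t‖ * ‖B‖ * ‖v‖ ≤ p * b * r :=
    mul_le_mul (mul_le_mul hPp hBb (norm_nonneg _) hp) hv (norm_nonneg _) (mul_nonneg hp hb)
  have := (inner_apply_apply_le (P t) B v (x t)).trans
    (mul_le_mul_of_nonneg_right hnorms (norm_nonneg (x t)))
  linarith

theorem iss_of_quadratic_lyapunov {X U : Type*} [NormedAddCommGroup X] [NormedSpace ℝ X]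
    [NormedAddCommGroup U] {f : (ℝ → U) → ℝ → X → X} {V : ℝ → X → ℝ} {a q κ : ℝ}
    (ha : 0 < a) (hq : 0 < q) (hV : Continuous fun z : ℝ × X => V z.1 z.2)
    (hlow : ∀ t : ℝ, 0 ≤ t → ∀ y : X, a * ‖y‖ ^ 2 ≤ V t y)
    (hup : ∀ t : ℝ, 0 ≤ t → ∀ y : X, V t y ≤ q * ‖y‖ ^ 2)
    (hderiv : ∀ u : ℝ → U, IsPC u → ∀ (x : ℝ → X) (t : ℝ), 0 ≤ t →
      HasDerivAt x (f u t (x t)) t →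
        ∃ d, HasDerivAt (fun s => V s (x s)) d t ∧ d ≤ -‖x t‖ ^ 2 + 2 * (κ * pcNorm u) * ‖x t‖) :
    ∃ β : ℝ → ℝ → ℝ, ∃ γ : ℝ → ℝ, ClassKL β ∧ ClassK γ ∧
      ∀ u : ℝ → U, IsPC u → ∀ t0 : ℝ, 0 ≤ t0 → ∀ x : ℝ → X, IsPCSol (f u) t0 x →
        ∀ t : ℝ, t0 ≤ t → ‖x t‖ ≤ β ‖x t0‖ (t - t0) + γ (pcNorm u) := by
  set k := (2 * q)⁻¹
  set c := 2 * κ ^ 2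
  refine ⟨fun r t => √(q / a) * exp (-(k / 2 * t)) * r, fun r => (√(c / (k * a)) + 1) * r,
    classKL_mul_exp (by positivity) (by positivity), classK_const_mul (by positivity), ?_⟩
  rintro u hu t0 ht0 x ⟨hxc, D, hD, hxd⟩ t ht
  have hr := hu.pcNorm_nonneg
  -- `V ≤ q ‖x‖²` turns the dissipation `-‖x‖²` into exponential decay at rate `k = 1 / (2q)`.
  have hdecay : ∀ s ∈ Ioo t0 t, s ∉ D → ∃ d, HasDerivAt (fun s => V s (x s)) d s ∧
      d ≤ -k * V s (x s) + c * pcNorm u ^ 2 := by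
    intro s hs hsD
    have hs0 : 0 ≤ s := ht0.trans hs.1.le
    obtain ⟨d, hd, hdle⟩ := hderiv u hu x s hs0 (hxd s ⟨hs.1, hsD⟩)
    refine ⟨d, hd, ?_⟩
    have hyoung := two_mul_le_mul_sq_add_sq_div one_half_pos ‖x s‖ (κ * pcNorm u)
    have hkV : k * V s (x s) ≤ ‖x s‖ ^ 2 / 2 :=
      (mul_le_mul_of_nonneg_left (hup s hs0 _) (by positivity)).trans_eq (by simp only [k]; field_simp)
    linarith
  have hVx : ContinuousOn (fun s => V s (x s)) (Icc t0 t) :=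
    hV.comp_continuousOn (continuousOn_id.prodMk (hxc.mono Icc_subset_Ici_self))
  calc ‖x t‖ ≤ √(q / a) * exp (-(k / 2 * (t - t0))) * ‖x t0‖ + √(c * pcNorm u ^ 2 / (k * a)) :=
        norm_le_of_quadratic_lyapunov ha hq.le (by positivity) (by positivity) ht hD hVx
          (hlow t (ht0.trans ht) _) (hup t0 ht0 _) hdecay
    _ ≤ √(q / a) * exp (-(k / 2 * (t - t0))) * ‖x t0‖ + (√(c / (k * a)) + 1) * pcNorm u := by
        rw [mul_div_right_comm, sqrt_mul' _ (sq_nonneg _), sqrt_sq hr]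
        gcongr
        linarith

theorem stmt7_general {X U : Type*} [NormedAddCommGroup X] [InnerProductSpace ℝ X] [CompleteSpace X]
    [NormedAddCommGroup U] [NormedSpace ℝ U]
    (A : ℝ → X →L[ℝ] X)
    (B : ℝ → U →L[ℝ] X)
    (btilde : ℝ) (hb : IsLUB ((fun t => ‖B t‖) '' Set.Ici 0) btilde)
    (P P' : ℝ → X →L[ℝ] X)
    (hP : ∀ t : ℝ, HasDerivAt P (P' t) t)
    (hPsa : ∀ t : ℝ, ContinuousLinearMap.adjoint (P t) = P t)
    (μ₁ : ℝ) (hμ₁ : 0 < μ₁)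
    (hcoer : ∀ t : ℝ, 0 ≤ t → ∀ x : X, μ₁ * ‖x‖ ^ 2 ≤ ⟪P t x, x⟫)
    (p : ℝ) (hp : IsLUB ((fun t => ‖P t‖) '' Set.Ici 0) p)
    (hLyap : ∀ t : ℝ, 0 ≤ t →
      (ContinuousLinearMap.adjoint (A t)).comp (P t) + (P t).comp (A t) + P' t =
        -(ContinuousLinearMap.id ℝ X)) :
    (∀ t : ℝ, 0 ≤ t → ∀ x : X,
      μ₁ * ‖x‖ ^ 2 ≤ ⟪P t x, x⟫ ∧ ⟪P t x, x⟫ ≤ p * ‖x‖ ^ 2) ∧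
    (∀ u : ℝ → U, IsPC u → ∀ t0 : ℝ, 0 ≤ t0 → ∀ x : ℝ → X,
      IsPCSol (fun t ξ => A t ξ + B t (u t)) t0 x →
      ∀ t ∈ Set.Ioi t0, ∀ η : ℝ, 0 < η →
        HasDerivAt x (A t (x t) + B t (u t)) t →
        ∀ v' : ℝ, HasDerivAt (fun s => ⟪P s (x s), x s⟫) v' t →
          v' ≤ -‖x t‖ ^ 2 + p * btilde * η * ‖x t‖ ^ 2 + p * btilde / η * pcNorm u ^ 2) ∧
    (∃ β : ℝ → ℝ → ℝ, ∃ γ : ℝ → ℝ, ClassKL β ∧ ClassK γ ∧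
      ∀ u : ℝ → U, IsPC u → ∀ t0 : ℝ, 0 ≤ t0 → ∀ x : ℝ → X,
        IsPCSol (fun t ξ => A t ξ + B t (u t)) t0 x →
        ∀ t : ℝ, t0 ≤ t → ‖x t‖ ≤ β ‖x t0‖ (t - t0) + γ (pcNorm u)) := by
  have hPp : ∀ t : ℝ, 0 ≤ t → ‖P t‖ ≤ p := fun t ht => hp.1 ⟨t, ht, rfl⟩
  have hBb : ∀ t : ℝ, 0 ≤ t → ‖B t‖ ≤ btilde := fun t ht => hb.1 ⟨t, ht, rfl⟩
  have hupper : ∀ t : ℝ, 0 ≤ t → ∀ y : X, ⟪P t y, y⟫ ≤ p * ‖y‖ ^ 2 := fun t ht y =>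
    (inner_apply_self_le (P t) y).trans (by gcongr; exact hPp t ht)
  have hVderiv : ∀ u : ℝ → U, IsPC u → ∀ (x : ℝ → X) (t : ℝ), 0 ≤ t →
      HasDerivAt x (A t (x t) + B t (u t)) t → ∃ d, HasDerivAt (fun s => ⟪P s (x s), x s⟫) d t ∧
        d ≤ -‖x t‖ ^ 2 + 2 * (p * btilde * pcNorm u) * ‖x t‖ := fun u hu x t ht hx =>
    exists_hasDerivAt_inner_apply_self_le_of_lyapunov (hP t) (isSelfAdjoint_iff'.2 (hPsa t))
      (hLyap t ht) (hPp t ht) (hBb t ht) (hu.norm_le_pcNorm ht) hx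
  refine ⟨fun t ht y => ⟨hcoer t ht y, hupper t ht y⟩, ?_, ?_⟩
  · rintro u hu t0 ht0 x - t ht η hη hx v' hv'
    obtain ⟨d, hd, hdle⟩ := hVderiv u hu x t (ht0.trans ht.le) hx
    have hpb : 0 ≤ p * btilde :=
      mul_nonneg ((norm_nonneg _).trans (hPp 0 le_rfl)) ((norm_nonneg _).trans (hBb 0 le_rfl))
    have hyoung := two_mul_le_mul_sq_add_sq_div hη ‖x t‖ (pcNorm u)
    rw [hv'.unique hd]
    calc d ≤ -‖x t‖ ^ 2 + p * btilde * (2 * ‖x t‖ * pcNorm u) := by linarith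
      _ ≤ -‖x t‖ ^ 2 + p * btilde * (η * ‖x t‖ ^ 2 + pcNorm u ^ 2 / η) := by gcongr
      _ = _ := by ring
  · have hPc : Continuous P := continuous_iff_continuousAt.2 fun t => (hP t).continuousAt
    exact iss_of_quadratic_lyapunov (f := fun u t ξ => A t ξ + B t (u t)) hμ₁
      (lt_max_of_lt_right hμ₁)
      (((hPc.comp continuous_fst).clm_apply continuous_snd).inner continuous_snd) hcoer
      (fun t ht y => (hupper t ht y).trans (by gcongr; exact le_max_left p μ₁)) hVderiv

/-- `V(t,x) = ⟨P(t)x,x⟩` built from the Lyapunov equality is a coercive ISS Lyapunov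
function for `ẋ = A(t)x + B(t)u`, and the system is ISS. -/
theorem stmt7 {X U : Type*} [NormedAddCommGroup X] [InnerProductSpace ℝ X] [CompleteSpace X]
    [NormedAddCommGroup U] [NormedSpace ℝ U]
    (A : ℝ → X →L[ℝ] X) (hAcont : Continuous A) (hAbdd : ∃ C : ℝ, ∀ t : ℝ, ‖A t‖ ≤ C)
    (B : ℝ → U →L[ℝ] X) (hBcont : Continuous B)
    (btilde : ℝ) (hb : IsLUB ((fun t => ‖B t‖) '' Set.Ici 0) btilde)
    (P P' : ℝ → X →L[ℝ] X)
    (hP : ∀ t : ℝ, HasDerivAt P (P' t) t) (hP'cont : Continuous P')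
    (hPsa : ∀ t : ℝ, ContinuousLinearMap.adjoint (P t) = P t)
    (hPpos : ∀ t : ℝ, ∀ x : X, x ≠ 0 → 0 < ⟪P t x, x⟫)
    (μ₁ : ℝ) (hμ₁ : 0 < μ₁)
    (hcoer : ∀ t : ℝ, 0 ≤ t → ∀ x : X, μ₁ * ‖x‖ ^ 2 ≤ ⟪P t x, x⟫)
    (p : ℝ) (hp : IsLUB ((fun t => ‖P t‖) '' Set.Ici 0) p)
    (hLyap : ∀ t : ℝ, 0 ≤ t →
      (ContinuousLinearMap.adjoint (A t)).comp (P t) + (P t).comp (A t) + P' t =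
        -(ContinuousLinearMap.id ℝ X)) :
    (∀ t : ℝ, 0 ≤ t → ∀ x : X,
      μ₁ * ‖x‖ ^ 2 ≤ ⟪P t x, x⟫ ∧ ⟪P t x, x⟫ ≤ p * ‖x‖ ^ 2) ∧
    (∀ u : ℝ → U, IsPC u → ∀ t0 : ℝ, 0 ≤ t0 → ∀ x : ℝ → X,
      IsPCSol (fun t ξ => A t ξ + B t (u t)) t0 x →
      ∀ t ∈ Set.Ioi t0, ∀ η : ℝ, 0 < η →
        HasDerivAt x (A t (x t) + B t (u t)) t →
        ∀ v' : ℝ, HasDerivAt (fun s => ⟪P s (x s), x s⟫) v' t →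
          v' ≤ -‖x t‖ ^ 2 + p * btilde * η * ‖x t‖ ^ 2 + p * btilde / η * pcNorm u ^ 2) ∧
    (∃ β : ℝ → ℝ → ℝ, ∃ γ : ℝ → ℝ, ClassKL β ∧ ClassK γ ∧
      ∀ u : ℝ → U, IsPC u → ∀ t0 : ℝ, 0 ≤ t0 → ∀ x : ℝ → X,
        IsPCSol (fun t ξ => A t ξ + B t (u t)) t0 x →
        ∀ t : ℝ, t0 ≤ t → ‖x t‖ ≤ β ‖x t0‖ (t - t0) + γ (pcNorm u)) :=
  stmt7_general A B btilde hb P P' hP hPsa μ₁ hμ₁ hcoer p hp hLyap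
end
end

section
/- For any positive definite function θ∈𝒫 there exists β∈𝒦ℒ such that for any t₀≥0 and any continuous function ω:[t₀,∞)→ℝ≥0 satisfying the differential inequality D⁺ω(t) ≤ −θ(ω(t)) for all t≥t₀ (where D⁺ denotes the right upper Dini derivative), it holds that ω(t) ≤ β(ω(t₀), t−t₀) for all t≥t₀. -/
open Filter Topology Set MeasureTheory
open scoped RealInnerProductSpace

noncomputable section

/-!
Let `ρ = min(θ, id) / 2`: continuous and positive on `(0, ∞)`, with `ρ < θ` and `ρ ≤ id`. In the
coordinate `x = log y` the equation `ẏ = ρ(y)` becomes `ẋ = 1 / k(x)` with `k(x) = eˣ / ρ(eˣ) ≥ 1`,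
so its time `ζ(x) = ∫₀ˣ k` is an increasing bijection of `ℝ`, and
`β(r, s) = exp ζ⁻¹(ζ(log r) − s)` is the solution of `ẏ = −ρ(y)` starting at `r`, a `𝒦ℒ` function.
A nonnegative `ω` with `D⁺ω ≤ −θ(ω)` that vanishes once stays zero, being nonincreasing wherever it
is positive; while `ω > 0`, the fencing theorem keeps it below `β(ω(t₀), · − t₀)`, since `−θ < −ρ`.
-/

open Real

theorem eventually_slope_lt_of_limsup_le {f : ℝ → ℝ} {x c r : ℝ} (hc : c < 0)
    (hf : limsup (fun h => (f (x + h) - f x) / h) (𝓝[>] 0) ≤ c) (hr : c < r) :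
    ∀ᶠ z in 𝓝[>] x, slope f x z < r := by
  -- an unbounded difference quotient has the junk `limsup` `0`, excluded by `c < 0`
  have hbdd : IsBoundedUnder (· ≤ ·) (𝓝[>] (0 : ℝ)) fun h => (f (x + h) - f x) / h := by
    by_contra hunb
    rw [Real.limsup_of_not_isBoundedUnder hunb] at hf
    linarith
  have hshift : Tendsto (fun z => z - x) (𝓝[>] x) (𝓝[>] 0) :=
    tendsto_nhdsWithin_of_tendsto_nhds_of_eventually_within _
      (((continuous_sub_right x).tendsto' x 0 (sub_self x)).mono_left nhdsWithin_le_nhds)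
      (eventually_nhdsWithin_of_forall fun z hz => mem_Ioi.2 (sub_pos.2 hz))
  filter_upwards [hshift.eventually (eventually_lt_of_limsup_lt (hf.trans_lt hr) hbdd)] with z hz
  rw [slope_def_field]
  rwa [add_sub_cancel] at hz

theorem image_le_of_limsup_slope_right_lt_deriv_boundary {f f' B B' : ℝ → ℝ} {a b : ℝ}
    (hf : ContinuousOn f (Icc a b))
    (hf' : ∀ x ∈ Ico a b, limsup (fun h => (f (x + h) - f x) / h) (𝓝[>] 0) ≤ f' x)
    (hf'_neg : ∀ x ∈ Ico a b, f' x < 0) (ha : f a ≤ B a) (hB : ∀ x, HasDerivAt B (B' x) x)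
    (bound : ∀ x ∈ Ico a b, f x = B x → f' x < B' x) : ∀ ⦃x⦄, x ∈ Icc a b → f x ≤ B x :=
  image_le_of_liminf_slope_right_lt_deriv_boundary hf
    (fun x hx _ hr => (eventually_slope_lt_of_limsup_le (hf'_neg x hx) (hf' x hx) hr).frequently)
    ha hB bound

theorem pos_of_pos_of_limsup_slope_le {θ ω : ℝ → ℝ} {t0 : ℝ} (hθ : ∀ s, 0 < s → 0 < θ s)
    (hω : ContinuousOn ω (Ici t0)) (hnn : ∀ t, t0 ≤ t → 0 ≤ ω t)
    (hD : ∀ t, t0 ≤ t → limsup (fun h => (ω (t + h) - ω t) / h) (𝓝[>] 0) ≤ -θ (ω t))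
    {t : ℝ} (ht : 0 < ω t) {u : ℝ} (hu : u ∈ Icc t0 t) : 0 < ω u := by
  by_contra! hu0
  set K := Icc u t ∩ ω ⁻¹' {0}
  have hK : IsCompact K := isCompact_Icc.of_isClosed_subset
    ((hω.mono fun v hv => hu.1.trans hv.1).preimage_isClosed_of_isClosed isClosed_Icc
      isClosed_singleton) inter_subset_left
  obtain ⟨⟨huy, hyt⟩, hy0⟩ : sSup K ∈ K :=
    hK.sSup_mem ⟨u, ⟨le_rfl, hu.2⟩, le_antisymm hu0 (hnn u hu.1)⟩
  set y := sSup K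
  have hyt' : y < t := hyt.lt_of_ne fun h => by simp_all
  have hpos : ∀ v ∈ Ioc y t, 0 < ω v := fun v hv =>
    (hnn v (hu.1.trans (huy.trans hv.1.le))).lt_of_ne' fun h =>
      hv.1.not_ge (le_csSup hK.bddAbove ⟨⟨huy.trans hv.1.le, hv.2⟩, h⟩)
  have hdecr : ∀ v ∈ Ioo y t, ω t ≤ ω v := fun v hv =>
    image_le_of_limsup_slope_right_lt_deriv_boundary (f' := fun s => -θ (ω s))
      (B := fun _ => ω v) (B' := 0)
      (hω.mono fun s hs => hu.1.trans (huy.trans (hv.1.le.trans hs.1)))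
      (fun s hs => hD s (hu.1.trans (huy.trans (hv.1.le.trans hs.1))))
      (fun s hs => neg_neg_of_pos (hθ _ (hpos s ⟨hv.1.trans_le hs.1, hs.2.le⟩))) le_rfl
      (fun _ => hasDerivAt_const _ (ω v))
      (fun s hs _ => neg_neg_of_pos (hθ _ (hpos s ⟨hv.1.trans_le hs.1, hs.2.le⟩)))
      ⟨hv.2.le, le_rfl⟩
  have hlim : Tendsto ω (𝓝[>] y) (𝓝 0) :=
    hy0 ▸ ((hω y (hu.1.trans huy)).mono fun s hs => (hu.1.trans huy).trans (le_of_lt hs))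
  have : ω t ≤ 0 := ge_of_tendsto hlim (mem_of_superset (Ioo_mem_nhdsGT hyt') hdecr)
  linarith

theorem exists_orderIso_hasDerivAt_exp_symm {ρ : ℝ → ℝ} (hρ : ContinuousOn ρ (Ioi 0))
    (hρ_pos : ∀ s, 0 < s → 0 < ρ s) (hρ_le : ∀ s, 0 < s → ρ s ≤ s) :
    ∃ e : ℝ ≃o ℝ, ∀ y, HasDerivAt (fun y => exp (e.symm y)) (ρ (exp (e.symm y))) y := by
  set k : ℝ → ℝ := fun x => exp x / ρ (exp x)
  have hk : Continuous k := continuous_exp.div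
    (hρ.comp_continuous continuous_exp fun x => exp_pos x) fun x => (hρ_pos _ (exp_pos x)).ne'
  have hk_one : ∀ x, 1 ≤ k x := fun x =>
    (one_le_div (hρ_pos _ (exp_pos x))).2 (hρ_le _ (exp_pos x))
  set ζ : ℝ → ℝ := fun x => ∫ v in (0 : ℝ)..x, k v
  have hζ : ∀ x, HasDerivAt ζ (k x) x := fun x => (hk.integral_hasStrictDerivAt 0 x).hasDerivAt
  have hζ_mono : StrictMono ζ :=
    strictMono_of_hasDerivAt_pos hζ fun x => one_pos.trans_le (hk_one x)
  have hζ_sub_id : Monotone fun x => ζ x - x :=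
    monotone_of_hasDerivAt_nonneg (fun x => (hζ x).sub (hasDerivAt_id x))
      fun x => sub_nonneg.2 (hk_one x)
  have hζ_zero : ζ 0 = 0 := intervalIntegral.integral_same
  have hζ_surj : Function.Surjective ζ := by
    refine (continuous_iff_continuousAt.2 fun x => (hζ x).continuousAt).surjective ?_ ?_
    · refine tendsto_atTop_mono' atTop ?_ tendsto_id
      filter_upwards [eventually_ge_atTop 0] with x hx
      simpa [hζ_zero] using hζ_sub_id hx
    · refine tendsto_atBot_mono' atBot ?_ tendsto_id
      filter_upwards [eventually_le_atBot 0] with x hx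
      simpa [hζ_zero] using hζ_sub_id hx
  set e := hζ_mono.orderIsoOfSurjective ζ hζ_surj
  refine ⟨e, fun y => ?_⟩
  have he_symm : HasDerivAt e.symm (k (e.symm y))⁻¹ y :=
    HasDerivAt.of_local_left_inverse e.symm.continuous.continuousAt (hζ _)
      (one_pos.trans_le (hk_one _)).ne' (Eventually.of_forall e.apply_symm_apply)
  convert he_symm.exp using 1
  have := (hρ_pos _ (exp_pos (e.symm y))).ne'
  simp only [k]
  field_simp

/-- Given the `e` of `exists_orderIso_hasDerivAt_exp_symm`, `s ↦ flowKL e r s` solves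
`ẏ = -ρ(y)` with `y(0) = r`. -/
def flowKL (e : ℝ ≃o ℝ) (r s : ℝ) : ℝ := if 0 < r then exp (e.symm (e (log r) - s)) else 0

namespace flowKL

variable (e : ℝ ≃o ℝ) {r s : ℝ}

theorem of_pos (hr : 0 < r) (s : ℝ) : flowKL e r s = exp (e.symm (e (log r) - s)) := if_pos hr

theorem nonneg (r s : ℝ) : 0 ≤ flowKL e r s := by
  unfold flowKL
  split_ifs <;> positivity

theorem pos (hr : 0 < r) (s : ℝ) : 0 < flowKL e r s := by
  rw [of_pos e hr]
  exact exp_pos _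

theorem zero_left (s : ℝ) : flowKL e 0 s = 0 := if_neg (lt_irrefl 0)

theorem zero_right (hr : 0 < r) : flowKL e r 0 = r := by
  simp [of_pos e hr, exp_log hr]

theorem strictAnti (hr : 0 < r) : StrictAnti (flowKL e r) := fun s s' hss' => by
  simp only [of_pos e hr, exp_lt_exp]
  exact e.symm.strictMono (by linarith)

theorem le_self (hr : 0 ≤ r) (hs : 0 ≤ s) : flowKL e r s ≤ r := by
  rcases hr.eq_or_lt with rfl | hr
  · exact (zero_left e s).le
  · exact (zero_right e hr).subst ((strictAnti e hr).antitone hs)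

theorem strictMonoOn_left (s : ℝ) : StrictMonoOn (flowKL e · s) (Ici 0) := by
  intro a ha b _ hab
  rcases (mem_Ici.1 ha).eq_or_lt with rfl | ha
  · simpa only [zero_left] using pos e hab s
  · simp only [of_pos e ha, of_pos e (ha.trans hab), exp_lt_exp, e.symm.lt_iff_lt,
      sub_lt_sub_iff_right, e.lt_iff_lt]
    exact log_lt_log ha hab

theorem continuousOn_left {s : ℝ} (hs : 0 ≤ s) : ContinuousOn (flowKL e · s) (Ici 0) := by
  intro r hr
  rcases (mem_Ici.1 hr).eq_or_lt with rfl | hr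
  · rw [ContinuousWithinAt, zero_left]
    refine squeeze_zero' (Eventually.of_forall fun r => nonneg e r s) ?_
      (tendsto_id.mono_left nhdsWithin_le_nhds)
    filter_upwards [self_mem_nhdsWithin] with r' hr' using le_self e hr' hs
  · refine ContinuousAt.continuousWithinAt (ContinuousAt.congr ?_
      ((eventually_gt_nhds hr).mono fun r' hr' => (of_pos e hr' s).symm))
    exact (continuous_exp.comp e.symm.continuous).continuousAt.comp
      ((e.continuous.continuousAt.comp (continuousAt_log hr.ne')).sub continuousAt_const)

theorem continuous (hr : 0 < r) : Continuous (flowKL e r) := by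
  simp only [funext (of_pos e hr)]
  fun_prop

theorem tendsto_atTop (hr : 0 < r) : Tendsto (flowKL e r) atTop (𝓝 0) := by
  have hlin : Tendsto (fun s => e (log r) - s) atTop atBot := by
    simpa only [sub_eq_add_neg] using
      tendsto_atBot_add_const_left atTop (e (log r)) tendsto_neg_atTop_atBot
  simp only [funext (of_pos e hr)]
  exact tendsto_exp_atBot.comp (e.symm.tendsto_atBot.comp hlin)

end flowKL

theorem classKL_flowKL (e : ℝ ≃o ℝ) : ClassKL (flowKL e) where
  classK _ ht := ⟨flowKL.continuousOn_left e ht, flowKL.strictMonoOn_left e _,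
    flowKL.zero_left e _, fun r _ => flowKL.nonneg e r _⟩
  contL _ hr := (flowKL.continuous e hr).continuousOn
  antiL _ hr := (flowKL.strictAnti e hr).strictAntiOn _
  tendstoL _ hr := flowKL.tendsto_atTop e hr

theorem le_flowKL_of_limsup_slope_le {ρ θ ω : ℝ → ℝ} {e : ℝ ≃o ℝ}
    (he : ∀ y, HasDerivAt (fun y => exp (e.symm y)) (ρ (exp (e.symm y))) y)
    (hθ : ∀ s, 0 < s → 0 < θ s) (hρθ : ∀ s, 0 < s → ρ s < θ s) {t0 t : ℝ} (ht : t0 ≤ t)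
    (hω : ContinuousOn ω (Icc t0 t))
    (hD : ∀ u ∈ Ico t0 t, limsup (fun h => (ω (u + h) - ω u) / h) (𝓝[>] 0) ≤ -θ (ω u))
    (hpos : ∀ u ∈ Icc t0 t, 0 < ω u) : ω t ≤ flowKL e (ω t0) (t - t0) := by
  set r := ω t0
  have hr : 0 < r := hpos t0 ⟨le_rfl, ht⟩
  set B : ℝ → ℝ := fun u => exp (e.symm (e (log r) - (u - t0)))
  have hB : ∀ u, HasDerivAt B (-ρ (B u)) u := fun u => by
    have h := (he _).scomp u (((hasDerivAt_id' u).sub_const t0).const_sub (e (log r)))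
    rwa [neg_one_smul] at h
  have hB_t0 : B t0 = r := by simp [B, exp_log hr]
  rw [flowKL.of_pos e hr]
  exact image_le_of_limsup_slope_right_lt_deriv_boundary hω hD
    (fun u hu => neg_neg_of_pos (hθ _ (hpos u (Ico_subset_Icc_self hu)))) hB_t0.ge hB
    (fun u hu hωB => hωB ▸ neg_lt_neg (hρθ _ (hωB ▸ hpos u (Ico_subset_Icc_self hu))))
    ⟨ht, le_rfl⟩

/-- Comparison principle: for every positive definite `θ` there is a `𝒦ℒ` function `β`
bounding every nonnegative continuous solution of `D⁺ω ≤ −θ(ω)`. -/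
theorem stmt18 (θ : ℝ → ℝ) (hθ : ClassPD θ) :
    ∃ β : ℝ → ℝ → ℝ, ClassKL β ∧
      ∀ t0 : ℝ, 0 ≤ t0 → ∀ ω : ℝ → ℝ,
        ContinuousOn ω (Set.Ici t0) → (∀ t : ℝ, t0 ≤ t → 0 ≤ ω t) →
        (∀ t : ℝ, t0 ≤ t →
          Filter.limsup (fun h => (ω (t + h) - ω t) / h) (nhdsWithin 0 (Set.Ioi 0)) ≤
            - θ (ω t)) →
        ∀ t : ℝ, t0 ≤ t → ω t ≤ β (ω t0) (t - t0) := by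
  obtain ⟨e, he⟩ := exists_orderIso_hasDerivAt_exp_symm (ρ := fun s => min (θ s) s / 2)
    (((hθ.cont.mono Ioi_subset_Ici_self).inf continuousOn_id).div_const 2)
    (fun s hs => half_pos (lt_min (hθ.pos s hs) hs))
    (fun s hs => (half_le_self (le_min (hθ.pos s hs).le hs.le)).trans (min_le_right _ _))
  refine ⟨flowKL e, classKL_flowKL e, fun t0 _ ω hω hnn hD t ht => ?_⟩
  rcases (hnn t ht).eq_or_lt with hωt | hωt
  · exact hωt ▸ flowKL.nonneg e _ _
  · exact le_flowKL_of_limsup_slope_le he hθ.pos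
      (fun s hs => (half_lt_self (lt_min (hθ.pos s hs) hs)).trans_le (min_le_left _ _)) ht
      (hω.mono Icc_subset_Ici_self) (fun u hu => hD u hu.1)
      (fun u hu => pos_of_pos_of_limsup_slope_le hθ.pos hω hnn hD hωt hu)
end
end

section
/- Let δ∈𝒦∞ and let ℓ:ℝ≥0→ℝ≥0 be a continuous integrable function. Then there exists a 𝒦ℒ function σ such that every continuously differentiable y:[t₀,∞)→ℝ≥0 satisfying ẏ(t) ≤ −δ(y(t)) + ℓ(t) for all t≥t₀ obeys y(t) ≤ σ(y(t₀), t−t₀) + 2∫₀^∞ℓ(s)ds for all t≥t₀. Moreover, if lim_{t→∞}ℓ(t)=0, then there exists a 𝒦ℒ function β, depending only on δ and ℓ, such that y(t) ≤ β(y(t₀) + ∫₀^∞ℓ(s)ds, t−t₀) for all t≥t₀. -/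
open Filter Topology Set MeasureTheory
open scoped RealInnerProductSpace

noncomputable section

/-!
Along a solution, `V t = y t + ∫_t^∞ l` is nonincreasing, since `V' = y' - l ≤ -δ (y t)`. Hence
`y t ≤ V t₀ ≤ y t₀ + ∫ l`, and as long as `y > ε` the function `V` decreases at rate at least `δ ε`;
so within time `V / δ ε` the solution drops to the level `ε` and afterwards stays below `ε` plus the
remaining tail of `l`. Running this on the second half of `[t₀, t₀ + τ]` with
`δ ε = 2 (y t₀ + ∫ l) / τ` gives `y (t₀ + τ) ≤ δ⁻¹ (2 (y t₀ + ∫ l) / τ) + ∫_{τ/2}^∞ l`, which tends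
to `0` as `τ → ∞` and can be turned into a `𝒦ℒ` function.
-/

lemma ClassKInf.exists_orderIso_rightInverse {δ : ℝ → ℝ} (hδ : ClassKInf δ) :
    ∃ φ : ℝ ≃o ℝ, φ 0 = 0 ∧ ∀ s, 0 ≤ s → δ (φ s) = s := by
  obtain ⟨⟨hcont, hmono, hzero, -⟩, hunb⟩ := hδ
  -- continued by the identity on `(-∞, 0]`, `δ` becomes an increasing bijection of `ℝ`
  set f : ℝ → ℝ := fun r => δ (max r 0) + min r 0 with hf
  have hf_pos : ∀ r, 0 ≤ r → f r = δ r := fun r hr => by simp [hf, hr]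
  have hf_neg : ∀ r, r ≤ 0 → f r = r := fun r hr => by simp [hf, hr, hzero]
  have f_strictMono : StrictMono f := by
    intro a b hab
    rcases le_or_gt b 0 with hb | hb
    · rwa [hf_neg a (hab.le.trans hb), hf_neg b hb]
    · have : δ (max a 0) < δ b := hmono (le_max_right a 0) hb.le (max_lt hab hb)
      rw [hf_pos b hb.le]
      simp only [hf]
      linarith [min_le_right a 0]
  have f_cont : Continuous f :=
    (hcont.comp_continuous (continuous_id.max continuous_const) fun r => le_max_right r 0).add
      (continuous_id.min continuous_const)
  have f_surj : Function.Surjective f := by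
    refine f_cont.surjective (tendsto_atTop_atTop_of_monotone f_strictMono.monotone fun b => ?_)
      (tendsto_atBot_atBot_of_monotone f_strictMono.monotone fun b => ?_)
    · obtain ⟨r, hr, hbr⟩ := hunb b
      exact ⟨r, (hf_pos r hr).symm ▸ hbr.le⟩
    · exact ⟨min b 0, (hf_neg _ (min_le_right b 0)).symm ▸ min_le_left b 0⟩
  set e := f_strictMono.orderIsoOfSurjective f f_surj
  have he0 : e.symm 0 = 0 := by
    rw [e.symm_apply_eq]
    exact (hf_neg 0 le_rfl).symm
  refine ⟨e.symm, he0, fun s hs => ?_⟩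
  have : 0 ≤ e.symm s := he0 ▸ e.symm.monotone hs
  rw [← hf_pos _ this]
  exact e.apply_symm_apply s

/-- `tailIntegral l s = ∫ u in Ioi s, l u` for `s ≥ 0`; written through the primitive so that it is
differentiable on all of `ℝ`. -/
def tailIntegral (l : ℝ → ℝ) (s : ℝ) : ℝ := (∫ u in Ici 0, l u) - ∫ u in 0..s, l u

section tailIntegral

variable {l : ℝ → ℝ}

@[simp]
lemma tailIntegral_zero : tailIntegral l 0 = ∫ u in Ici 0, l u := by
  simp [tailIntegral]

lemma hasDerivAt_tailIntegral (hlc : Continuous l) (s : ℝ) :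
    HasDerivAt (tailIntegral l) (-l s) s :=
  (hlc.integral_hasStrictDerivAt 0 s).hasDerivAt.const_sub _

lemma continuous_tailIntegral (hlc : Continuous l) : Continuous (tailIntegral l) :=
  continuous_iff_continuousAt.2 fun s => (hasDerivAt_tailIntegral hlc s).continuousAt

lemma antitone_tailIntegral (hlc : Continuous l) (hln : ∀ t, 0 ≤ l t) :
    Antitone (tailIntegral l) :=
  antitone_of_deriv_nonpos (fun s => (hasDerivAt_tailIntegral hlc s).differentiableAt) fun s => by
    rw [(hasDerivAt_tailIntegral hlc s).deriv]
    exact neg_nonpos.2 (hln s)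

lemma tendsto_tailIntegral (hli : IntegrableOn l (Ici 0)) :
    Tendsto (tailIntegral l) atTop (𝓝 0) := by
  have := (intervalIntegral_tendsto_integral_Ioi 0 (hli.mono_set Ioi_subset_Ici_self)
    tendsto_id).const_sub (∫ u in Ioi 0, l u)
  rw [sub_self] at this
  unfold tailIntegral
  simpa only [integral_Ici_eq_integral_Ioi, id] using this

lemma tailIntegral_nonneg (hlc : Continuous l) (hln : ∀ t, 0 ≤ l t)
    (hli : IntegrableOn l (Ici 0)) (s : ℝ) : 0 ≤ tailIntegral l s :=
  (antitone_tailIntegral hlc hln).le_of_tendsto (tendsto_tailIntegral hli) s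

lemma tailIntegral_le_integral (hlc : Continuous l) (hln : ∀ t, 0 ≤ l t) {s : ℝ} (hs : 0 ≤ s) :
    tailIntegral l s ≤ ∫ u in Ici 0, l u := by
  simpa using antitone_tailIntegral hlc hln hs

end tailIntegral

section Comparison

variable {δ l y y' : ℝ → ℝ} {t0 : ℝ}

lemma add_tailIntegral_le_sub_mul (hlc : Continuous l)
    (hy : ∀ t, t0 ≤ t → HasDerivAt y (y' t) t) (hy' : ∀ t, t0 ≤ t → y' t ≤ -δ (y t) + l t)
    {c s t : ℝ} (hs : t0 ≤ s) (hst : s ≤ t) (hc : ∀ u ∈ Icc s t, c ≤ δ (y u)) :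
    y t + tailIntegral l t ≤ y s + tailIntegral l s - c * (t - s) := by
  have hV : ∀ u ∈ Icc s t,
      HasDerivAt (fun u => y u + tailIntegral l u) (y' u + -l u) u := fun u hu =>
    (hy u (hs.trans hu.1)).add (hasDerivAt_tailIntegral hlc u)
  have := (convex_Icc s t).image_sub_le_mul_sub_of_deriv_le (HasDerivAt.continuousOn hV)
    (fun u hu => (hV u (interior_subset hu)).differentiableAt.differentiableWithinAt)
    (C := -c) (fun u hu => by
      rw [interior_Icc] at hu
      rw [(hV u (Ioo_subset_Icc_self hu)).deriv]
      linarith [hy' u (hs.trans hu.1.le), hc u (Ioo_subset_Icc_self hu)])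
    s (left_mem_Icc.2 hst) t (right_mem_Icc.2 hst) hst
  linarith

lemma add_tailIntegral_le (hδ : ClassK δ) (hlc : Continuous l) (hy0 : ∀ t, t0 ≤ t → 0 ≤ y t)
    (hy : ∀ t, t0 ≤ t → HasDerivAt y (y' t) t) (hy' : ∀ t, t0 ≤ t → y' t ≤ -δ (y t) + l t)
    {s t : ℝ} (hs : t0 ≤ s) (hst : s ≤ t) :
    y t + tailIntegral l t ≤ y s + tailIntegral l s := by
  simpa using add_tailIntegral_le_sub_mul hlc hy hy' hs hst (c := 0)
    fun u hu => hδ.nonneg _ (hy0 u (hs.trans hu.1))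

lemma le_add_integral (hδ : ClassK δ) (hlc : Continuous l) (hln : ∀ t, 0 ≤ l t)
    (hli : IntegrableOn l (Ici 0)) (ht0 : 0 ≤ t0) (hy0 : ∀ t, t0 ≤ t → 0 ≤ y t)
    (hy : ∀ t, t0 ≤ t → HasDerivAt y (y' t) t) (hy' : ∀ t, t0 ≤ t → y' t ≤ -δ (y t) + l t)
    {t : ℝ} (ht : t0 ≤ t) :
    y t ≤ y t0 + ∫ u in Ici 0, l u := by
  linarith [add_tailIntegral_le hδ hlc hy0 hy hy' le_rfl ht, tailIntegral_nonneg hlc hln hli t,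
    tailIntegral_le_integral hlc hln ht0]

lemma le_add_tailIntegral_of_add_div_le (hδ : ClassK δ) (hlc : Continuous l) (hln : ∀ t, 0 ≤ l t)
    (hli : IntegrableOn l (Ici 0)) (hy0 : ∀ t, t0 ≤ t → 0 ≤ y t)
    (hy : ∀ t, t0 ≤ t → HasDerivAt y (y' t) t) (hy' : ∀ t, t0 ≤ t → y' t ≤ -δ (y t) + l t)
    {s ε t : ℝ} (hs : t0 ≤ s) (hε : 0 < ε) (ht : s + (y s + tailIntegral l s) / δ ε ≤ t) :
    y t ≤ ε + tailIntegral l s := by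
  have hδε : 0 < δ ε := hδ.zero ▸ hδ.mono self_mem_Ici hε.le hε
  set T := (y s + tailIntegral l s) / δ ε with hT
  have hT0 : 0 ≤ T := div_nonneg (add_nonneg (hy0 s hs) (tailIntegral_nonneg hlc hln hli s)) hδε.le
  by_cases hreach : ∃ u ∈ Icc s (s + T), y u ≤ ε
  · obtain ⟨u, hu, hyu⟩ := hreach
    linarith [add_tailIntegral_le hδ hlc hy0 hy hy' (hs.trans hu.1) (hu.2.trans ht),
      tailIntegral_nonneg hlc hln hli t, antitone_tailIntegral hlc hln hu.1]
  · push Not at hreach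
    have hdecay := add_tailIntegral_le_sub_mul hlc hy hy' hs (le_add_of_nonneg_right hT0)
      fun u hu => hδ.mono.monotoneOn hε.le (hy0 u (hs.trans hu.1)) (hreach u hu).le
    have hTδ : δ ε * T = y s + tailIntegral l s := by rw [hT]; field_simp
    have := hreach (s + T) (right_mem_Icc.2 (le_add_of_nonneg_right hT0))
    linarith [tailIntegral_nonneg hlc hln hli (s + T)]

end Comparison

lemma ClassK.of_strictMonoOn {f : ℝ → ℝ} (hc : ContinuousOn f (Ici 0))
    (hm : StrictMonoOn f (Ici 0)) (h0 : f 0 = 0) : ClassK f :=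
  ⟨hc, hm, h0, fun _ hr => h0 ▸ hm.monotoneOn self_mem_Ici hr hr⟩

/-- Capping `g r τ` by `r` makes the envelope continuous at `τ = 0` (where `g r τ` blows up), and
the summand `r / (1 + τ)` makes it strictly monotone in both variables. -/
def klEnvelope (g : ℝ → ℝ → ℝ) (r τ : ℝ) : ℝ :=
  (if τ = 0 then r else min r (g r τ)) + r / (1 + τ)

section klEnvelope

variable {g : ℝ → ℝ → ℝ}

lemma klEnvelope_of_ne_zero {r τ : ℝ} (hτ : τ ≠ 0) :
    klEnvelope g r τ = min r (g r τ) + r / (1 + τ) := by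
  simp [klEnvelope, hτ]

lemma klEnvelope_zero_right (r : ℝ) : klEnvelope g r 0 = 2 * r := by
  simp [klEnvelope]
  ring

lemma classK_klEnvelope_zero : ClassK (klEnvelope g · 0) := by
  simp only [klEnvelope_zero_right]
  exact .of_strictMonoOn (by fun_prop) (fun a _ b _ hab => by linarith) (by simp)

lemma classK_klEnvelope_of_pos {τ : ℝ} (hτ : 0 < τ) (hcont : Continuous (g · τ))
    (hmono : Monotone (g · τ)) (hnonneg : 0 ≤ g 0 τ) : ClassK (klEnvelope g · τ) := by
  simp only [klEnvelope_of_ne_zero hτ.ne']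
  refine .of_strictMonoOn (by fun_prop) (fun a _ b _ hab => ?_) (by simp [hnonneg])
  have : a / (1 + τ) < b / (1 + τ) := by gcongr
  linarith [min_le_min hab.le (hmono hab.le)]

lemma continuousOn_klEnvelope {r : ℝ} (hcont : ContinuousOn (g r) (Ioi 0))
    (hlarge : ∀ᶠ τ in 𝓝[>] 0, r ≤ g r τ) : ContinuousOn (klEnvelope g r) (Ici 0) := by
  intro τ₀ hτ₀
  rcases (mem_Ici.1 hτ₀).eq_or_lt with rfl | hpos
  · have hcap : klEnvelope g r =ᶠ[𝓝[>] 0] fun τ => r + r / (1 + τ) := by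
      filter_upwards [hlarge, self_mem_nhdsWithin] with τ hτ hτpos
      rw [klEnvelope_of_ne_zero (ne_of_gt hτpos), min_eq_left hτ]
    rw [← continuousWithinAt_Ioi_iff_Ici]
    refine ContinuousWithinAt.congr_of_eventuallyEq ?_ hcap (by simp [klEnvelope])
    exact (continuousAt_const.add
      (continuousAt_const.div (by fun_prop) (by norm_num))).continuousWithinAt
  · have hev : klEnvelope g r =ᶠ[𝓝 τ₀] fun τ => min r (g r τ) + r / (1 + τ) := by
      filter_upwards [eventually_ne_nhds hpos.ne'] with τ hτ
      exact klEnvelope_of_ne_zero hτ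
    refine (ContinuousAt.congr ?_ hev.symm).continuousWithinAt
    exact (continuousAt_const.min (hcont.continuousAt (Ioi_mem_nhds hpos))).add
      (continuousAt_const.div (by fun_prop) (by linarith))

lemma strictAntiOn_klEnvelope {r : ℝ} (hr : 0 < r) (hanti : AntitoneOn (g r) (Ioi 0)) :
    StrictAntiOn (klEnvelope g r) (Ici 0) := by
  intro a ha b _ hab
  have hb : 0 < b := lt_of_le_of_lt ha hab
  have hcap : min r (g r b) ≤ if a = 0 then r else min r (g r a) := by
    split_ifs with ha0
    · exact min_le_left _ _
    · exact min_le_min le_rfl (hanti (lt_of_le_of_ne ha (Ne.symm ha0)) hb hab.le)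
  have : r / (1 + b) < r / (1 + a) := by
    have : (0 : ℝ) ≤ a := ha
    gcongr
  rw [klEnvelope_of_ne_zero hb.ne', klEnvelope]
  linarith

lemma tendsto_klEnvelope {r : ℝ} (hr : 0 ≤ r) (hg : Tendsto (g r) atTop (𝓝 0)) :
    Tendsto (klEnvelope g r) atTop (𝓝 0) := by
  have hev : (fun τ => min r (g r τ) + r / (1 + τ)) =ᶠ[atTop] klEnvelope g r := by
    filter_upwards [eventually_ne_atTop 0] with τ hτ
    exact (klEnvelope_of_ne_zero hτ).symm
  refine Tendsto.congr' hev ?_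
  have := (tendsto_const_nhds (x := r)).min hg
  rw [min_eq_right hr] at this
  simpa using this.add (tendsto_const_nhds.div_atTop (tendsto_atTop_add_const_left _ 1 tendsto_id))

lemma le_klEnvelope {x r τ : ℝ} (hr : 0 ≤ r) (hτ : 0 ≤ τ) (hxr : x ≤ r)
    (hxg : 0 < τ → x ≤ g r τ) : x ≤ klEnvelope g r τ := by
  have : 0 ≤ r / (1 + τ) := by positivity
  unfold klEnvelope
  split_ifs with hτ0
  · linarith
  · linarith [le_min hxr (hxg (lt_of_le_of_ne hτ (Ne.symm hτ0)))]

lemma classKL_klEnvelope (hcont_left : ∀ τ, 0 < τ → Continuous (g · τ))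
    (hmono_left : ∀ τ, 0 < τ → Monotone (g · τ)) (hnonneg : ∀ τ, 0 < τ → 0 ≤ g 0 τ)
    (hcont_right : ∀ r, 0 < r → ContinuousOn (g r) (Ioi 0))
    (hanti_right : ∀ r, 0 < r → AntitoneOn (g r) (Ioi 0))
    (hlarge : ∀ r, 0 < r → ∀ᶠ τ in 𝓝[>] 0, r ≤ g r τ)
    (htendsto : ∀ r, 0 < r → Tendsto (g r) atTop (𝓝 0)) : ClassKL (klEnvelope g) where
  classK τ hτ := by
    rcases hτ.eq_or_lt with rfl | hpos
    · exact classK_klEnvelope_zero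
    · exact classK_klEnvelope_of_pos hpos (hcont_left τ hpos) (hmono_left τ hpos) (hnonneg τ hpos)
  contL r hr := continuousOn_klEnvelope (hcont_right r hr) (hlarge r hr)
  antiL r hr := strictAntiOn_klEnvelope hr (hanti_right r hr)
  tendstoL r hr := tendsto_klEnvelope hr.le (htendsto r hr)

end klEnvelope

def transientBound (φ : ℝ ≃o ℝ) (l : ℝ → ℝ) (r τ : ℝ) : ℝ :=
  φ (2 * (r + ∫ u in Ici 0, l u) / τ) + tailIntegral l (τ / 2)

lemma le_transientBound {δ l y y' : ℝ → ℝ} {t0 : ℝ} (hδ : ClassK δ) {φ : ℝ ≃o ℝ}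
    (hφ0 : φ 0 = 0) (hφ : ∀ s, 0 ≤ s → δ (φ s) = s) (hlc : Continuous l) (hln : ∀ t, 0 ≤ l t)
    (hli : IntegrableOn l (Ici 0)) (ht0 : 0 ≤ t0) (hy0 : ∀ t, t0 ≤ t → 0 ≤ y t)
    (hy : ∀ t, t0 ≤ t → HasDerivAt y (y' t) t) (hy' : ∀ t, t0 ≤ t → y' t ≤ -δ (y t) + l t)
    {t : ℝ} (ht : t0 < t) :
    y t ≤ transientBound φ l (y t0) (t - t0) := by
  set L := ∫ u in Ici 0, l u
  set τ := t - t0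
  have hτ : 0 < τ := sub_pos.2 ht
  have hyt := le_add_integral hδ hlc hln hli ht0 hy0 hy hy' ht.le
  have htail : tailIntegral l (t0 + τ / 2) ≤ tailIntegral l (τ / 2) :=
    antitone_tailIntegral hlc hln (by linarith)
  unfold transientBound
  rcases (add_nonneg (hy0 t0 le_rfl) (integral_nonneg hln)).eq_or_lt with hR | hR
  · rw [← hR, mul_zero, zero_div, hφ0]
    linarith [tailIntegral_nonneg hlc hln hli (τ / 2)]
  · set ε := φ (2 * (y t0 + L) / τ)
    have harg : 0 < 2 * (y t0 + L) / τ := by positivity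
    have hε : 0 < ε := hφ0 ▸ φ.strictMono harg
    have hδε : δ ε = 2 * (y t0 + L) / τ := hφ _ harg.le
    have hwait : (y (t0 + τ / 2) + tailIntegral l (t0 + τ / 2)) / δ ε ≤ τ / 2 :=
      calc (y (t0 + τ / 2) + tailIntegral l (t0 + τ / 2)) / δ ε
          ≤ (y t0 + L) / δ ε := by
            refine div_le_div_of_nonneg_right ?_ (hδε ▸ harg.le)
            linarith [add_tailIntegral_le hδ hlc hy0 hy hy' le_rfl (by linarith : t0 ≤ t0 + τ / 2),
              tailIntegral_le_integral hlc hln ht0]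
        _ = τ / 2 := by rw [hδε]; field_simp [show y t0 + L ≠ 0 from hR.ne']
    have := le_add_tailIntegral_of_add_div_le hδ hlc hln hli hy0 hy hy' (s := t0 + τ / 2)
      (by linarith) hε (t := t) (by linarith)
    linarith

lemma monotone_transientBound (φ : ℝ ≃o ℝ) (l : ℝ → ℝ) {τ : ℝ} (hτ : 0 < τ) :
    Monotone (transientBound φ l · τ) :=
  fun _ _ hab => add_le_add (φ.monotone (by gcongr)) le_rfl

lemma classKL_klEnvelope_transientBound {l : ℝ → ℝ} (φ : ℝ ≃o ℝ) (hφ0 : φ 0 = 0)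
    (hlc : Continuous l) (hln : ∀ t, 0 ≤ l t) (hli : IntegrableOn l (Ici 0)) :
    ClassKL (klEnvelope (transientBound φ l)) := by
  have hL : 0 ≤ ∫ u in Ici 0, l u := integral_nonneg hln
  have hφ_nonneg : ∀ s, 0 ≤ s → 0 ≤ φ s := fun s hs => hφ0 ▸ φ.monotone hs
  refine classKL_klEnvelope (fun τ _ => ?_) (fun τ hτ => monotone_transientBound φ l hτ)
    (fun τ hτ => ?_) (fun r _ => ?_) (fun r hr a ha b _ hab => ?_) (fun r hr => ?_) (fun r _ => ?_)
  · exact (φ.continuous.comp (by fun_prop)).add continuous_const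
  · exact add_nonneg (hφ_nonneg _ (by positivity)) (tailIntegral_nonneg hlc hln hli _)
  · exact (φ.continuous.comp_continuousOn
      (continuousOn_const.div continuousOn_id fun τ hτ => ne_of_gt hτ)).add
      ((continuous_tailIntegral hlc).comp (continuous_id.div_const 2)).continuousOn
  · exact add_le_add (φ.monotone (div_le_div_of_nonneg_left (by positivity) ha hab))
      (antitone_tailIntegral hlc hln (by linarith))
  · have hblowup : Tendsto (fun τ => 2 * (r + ∫ u in Ici 0, l u) / τ) (𝓝[>] 0) atTop := by
      simpa only [div_eq_mul_inv] using tendsto_inv_nhdsGT_zero.const_mul_atTop (by positivity)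
    filter_upwards [(φ.tendsto_atTop.comp hblowup).eventually_ge_atTop r] with τ hτ
    exact le_add_of_le_of_nonneg hτ (tailIntegral_nonneg hlc hln hli _)
  · have hφlim := (φ.continuous.tendsto 0).comp
      ((tendsto_const_nhds (x := 2 * (r + ∫ u in Ici 0, l u))).div_atTop tendsto_id)
    rw [hφ0] at hφlim
    unfold transientBound
    simpa using hφlim.add ((tendsto_tailIntegral hli).comp (tendsto_id.atTop_div_const two_pos))

/-- Gronwall-type comparison lemma with an integrable disturbance `l`, and its refined
form when `l(t) → 0`. -/
theorem stmt19 (δ : ℝ → ℝ) (hδ : ClassKInf δ) (l : ℝ → ℝ)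
    (hlc : Continuous l) (hln : ∀ t : ℝ, 0 ≤ l t)
    (hli : MeasureTheory.IntegrableOn l (Set.Ici 0)) :
    (∃ σ : ℝ → ℝ → ℝ, ClassKL σ ∧
      ∀ t0 : ℝ, 0 ≤ t0 → ∀ y y' : ℝ → ℝ,
        (∀ t : ℝ, t0 ≤ t → 0 ≤ y t) →
        (∀ t : ℝ, t0 ≤ t → HasDerivAt y (y' t) t) →
        ContinuousOn y' (Set.Ici t0) →
        (∀ t : ℝ, t0 ≤ t → y' t ≤ - δ (y t) + l t) →
        ∀ t : ℝ, t0 ≤ t →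
          y t ≤ σ (y t0) (t - t0) + 2 * ∫ s in Set.Ici (0:ℝ), l s) ∧
    (Tendsto l atTop (nhds 0) →
      ∃ β : ℝ → ℝ → ℝ, ClassKL β ∧
        ∀ t0 : ℝ, 0 ≤ t0 → ∀ y y' : ℝ → ℝ,
          (∀ t : ℝ, t0 ≤ t → 0 ≤ y t) →
          (∀ t : ℝ, t0 ≤ t → HasDerivAt y (y' t) t) →
          ContinuousOn y' (Set.Ici t0) →
          (∀ t : ℝ, t0 ≤ t → y' t ≤ - δ (y t) + l t) →
          ∀ t : ℝ, t0 ≤ t →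
            y t ≤ β (y t0 + ∫ s in Set.Ici (0:ℝ), l s) (t - t0)) := by
  obtain ⟨φ, hφ0, hφ⟩ := hδ.exists_orderIso_rightInverse
  have hL : 0 ≤ ∫ s in Set.Ici (0:ℝ), l s := integral_nonneg hln
  have hKL := classKL_klEnvelope_transientBound φ hφ0 hlc hln hli
  refine ⟨⟨_, hKL, fun t0 ht0 y y' hy0 hy _ hy' t ht => ?_⟩,
    fun _ => ⟨_, hKL, fun t0 ht0 y y' hy0 hy _ hy' t ht => ?_⟩⟩
  all_goals
    have hbound := le_add_integral hδ.toClassK hlc hln hli ht0 hy0 hy hy' ht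
    have hdecay := fun hτ : 0 < t - t0 =>
      le_transientBound hδ.toClassK hφ0 hφ hlc hln hli ht0 hy0 hy hy' (sub_pos.1 hτ)
  · have := le_klEnvelope (x := y t - ∫ s in Ici 0, l s) (hy0 t0 le_rfl) (sub_nonneg.2 ht)
      (by linarith) fun hτ => by linarith [hdecay hτ]
    linarith
  · exact le_klEnvelope (by linarith [hy0 t0 le_rfl]) (sub_nonneg.2 ht) hbound fun hτ =>
      (hdecay hτ).trans (monotone_transientBound φ l hτ (le_add_of_nonneg_right hL))
end
end
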